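/- arXiv:2207.04923 — 7 statements merged into one kernel-verified Lean document; each statement's English description precedes it below -/
import Mathlib

section
/- For every integer t ≥ 1, the shallow vortex grid H_t is a minor of the segregated shallow vortex grid of order 2t. -/
/-!
Cut the `8t` columns of the segregated grid into `2t` blocks of four consecutive columns, block
`j` consisting of the columns `4j - 2, …, 4j + 1`; the crossing chords then join the cells `2, 3`
of each block to the cells `0, 1` of the next one. The vertex `(i, j)` of `H_t` is contracted from
block `j` of row `i + 1`. For `i = 0` we add, on row `0`, the outer cells `0, 3` of block `j` and
the inner cells `1, 2` of block `j + 1` (for even `j`) or `j - 1` (for odd `j`): one chord ties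
these inner cells to the rest of the branch set, and the remaining chords realise the edges
`(0, j) ~ (0, j + 2)`.
-/

/-- `H` is a minor of `G`: there is a family of pairwise disjoint branch sets in `G`,
each inducing a connected subgraph, such that every edge of `H` is realized between
the corresponding branch sets. -/
def IsMinorOf {V W : Type*} (H : SimpleGraph V) (G : SimpleGraph W) : Prop :=
  ∃ X : V → Set W,
    (∀ v : V, (G.induce (X v)).Connected) ∧
    (∀ u v : V, u ≠ v → Disjoint (X u) (X v)) ∧
    (∀ u v : V, H.Adj u v → ∃ a ∈ X u, ∃ b ∈ X v, G.Adj a b)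

/-- The shallow vortex grid `H_k`: `k` concentric cycles of length `2k`,
vertical edges between consecutive cycles, and chords `j ↦ j+2` on the first cycle. -/
def shallowVortexGrid (k : ℕ) : SimpleGraph (Fin k × ZMod (2 * k)) :=
  SimpleGraph.fromRel fun p q =>
    (p.1 = q.1 ∧ q.2 = p.2 + 1) ∨
    (p.2 = q.2 ∧ (q.1 : ℕ) = (p.1 : ℕ) + 1) ∨
    ((p.1 : ℕ) = 0 ∧ (q.1 : ℕ) = 0 ∧ q.2 = p.2 + 2)

/-- The segregated shallow vortex grid of order `k`: `k` concentric cycles of length `4k`,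
vertical edges between consecutive cycles, and for every `m < k` the crossing chords
`4m ↦ 4m+2` and `4m+1 ↦ 4m+3` on the first cycle. -/
def segShallowVortexGrid (k : ℕ) : SimpleGraph (Fin k × ZMod (4 * k)) :=
  SimpleGraph.fromRel fun p q =>
    (p.1 = q.1 ∧ q.2 = p.2 + 1) ∨
    (p.2 = q.2 ∧ (q.1 : ℕ) = (p.1 : ℕ) + 1) ∨
    ((p.1 : ℕ) = 0 ∧ (q.1 : ℕ) = 0 ∧ ∃ m : ℕ, m < k ∧
      ((p.2 = ((4 * m : ℕ) : ZMod (4 * k)) ∧ q.2 = ((4 * m + 2 : ℕ) : ZMod (4 * k))) ∨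
       (p.2 = ((4 * m + 1 : ℕ) : ZMod (4 * k)) ∧ q.2 = ((4 * m + 3 : ℕ) : ZMod (4 * k)))))

open Function SimpleGraph

theorem IsMinorOf.map {V W W' : Type*} {H : SimpleGraph V} {G' : SimpleGraph W'}
    {G : SimpleGraph W} (h : IsMinorOf H G') (φ : G' →g G) (hφ : Injective φ) :
    IsMinorOf H G := by
  obtain ⟨X, hconn, hdisj, hadj⟩ := h
  refine ⟨fun v => φ '' X v, fun v => ?_, fun u v huv => ?_, fun u v huv => ?_⟩
  · let ψ : G'.induce (X v) →g G.induce (φ '' X v) :=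
      ⟨fun w => ⟨φ w, Set.mem_image_of_mem φ w.2⟩, φ.map_adj⟩
    refine (hconn v).map ψ ?_
    rintro ⟨_, w, hw, rfl⟩
    exact ⟨⟨w, hw⟩, rfl⟩
  · exact (Set.disjoint_image_iff hφ).2 (hdisj u v huv)
  · obtain ⟨a, ha, b, hb, hab⟩ := hadj u v huv
    exact ⟨φ a, Set.mem_image_of_mem φ ha, φ b, Set.mem_image_of_mem φ hb, φ.map_adj hab⟩

theorem ZMod.natCast_inj_of_lt {a b c : ℕ} (ha : a < c) (hb : b < c) :
    (a : ZMod c) = b ↔ a = b :=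
  ⟨fun h => by rw [← ZMod.val_cast_of_lt ha, h, ZMod.val_cast_of_lt hb], congrArg _⟩

theorem ZMod.natCast_mul_val_add_one {n : ℕ} [NeZero n] (k : ℕ) (j : ZMod n) :
    ((k * (j + 1).val : ℕ) : ZMod (k * n)) = k * j.val + k := by
  rw [ZMod.val_add, ZMod.val_one_eq_one_mod, Nat.add_mod_mod, ← Nat.mul_mod_mul_left,
    ZMod.natCast_mod]
  push_cast; ring

section segShallowVortexGrid

variable {n : ℕ}

theorem segShallowVortexGrid_adj_horizontal (r : Fin n) (x : ZMod (4 * n)) :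
    (segShallowVortexGrid n).Adj (r, x) (r, x + 1) := by
  refine (fromRel_adj _ _ _).2 ⟨fun h => ?_, .inl <| .inl ⟨rfl, rfl⟩⟩
  have h1 : ((1 : ℕ) : ZMod (4 * n)) = 0 := by simpa using congrArg Prod.snd h
  have := Nat.dvd_one.1 ((ZMod.natCast_eq_zero_iff 1 (4 * n)).1 h1)
  omega

theorem segShallowVortexGrid_adj_vertical {r r' : Fin n} (h : (r' : ℕ) = r + 1)
    (x : ZMod (4 * n)) : (segShallowVortexGrid n).Adj (r, x) (r', x) :=
  (fromRel_adj _ _ _).2 ⟨fun hrr => by simp_all, .inl <| .inr <| .inl ⟨rfl, h⟩⟩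

theorem segShallowVortexGrid_adj_chord [NeZero n] {m k : ℕ} (hm : m < n) (hk : k < 2) :
    (segShallowVortexGrid n).Adj (0, ((4 * m + k : ℕ) : ZMod (4 * n)))
      (0, ((4 * m + k + 2 : ℕ) : ZMod (4 * n))) := by
  refine (fromRel_adj _ _ _).2 ⟨fun h => ?_, .inl <| .inr <| .inr ⟨rfl, rfl, m, hm, ?_⟩⟩
  · have := (ZMod.natCast_inj_of_lt (by omega) (by omega)).1 (congrArg Prod.snd h)
    omega
  · interval_cases k
    · exact .inl ⟨rfl, rfl⟩
    · exact .inr ⟨rfl, rfl⟩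

end segShallowVortexGrid

namespace SegShallowVortexGrid

variable {n : ℕ}

def blockColumn (c : ZMod n × Fin 4) : ZMod (4 * n) :=
  ((4 * c.1.val + c.2 : ℕ) : ZMod (4 * n)) - 2

theorem blockColumn_injective [NeZero n] : Injective (blockColumn (n := n)) := by
  rintro ⟨j, a⟩ ⟨j', a'⟩ h
  have hj := j.val_lt
  have hj' := j'.val_lt
  have := (ZMod.natCast_inj_of_lt (a := 4 * j.val + a) (b := 4 * j'.val + a')
    (by omega) (by omega)).1 (sub_left_injective h)
  have hjj : j.val = j'.val := by omega
  exact Prod.ext (ZMod.val_injective n hjj) (Fin.ext (show (a : ℕ) = a' by omega))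

def blockGrid (n : ℕ) : SimpleGraph (Fin n × ZMod n × Fin 4) :=
  (segShallowVortexGrid n).comap (Prod.map id blockColumn)

theorem blockGrid_adj_vertical {r r' : Fin n} (h : (r' : ℕ) = r + 1) (c : ZMod n × Fin 4) :
    (blockGrid n).Adj (r, c) (r', c) :=
  segShallowVortexGrid_adj_vertical h _

theorem blockGrid_adj_horizontal (r : Fin n) (j : ZMod n) {a b : Fin 4}
    (h : (b : ℕ) = a + 1) : (blockGrid n).Adj (r, j, a) (r, j, b) := by
  have : blockColumn (j, b) = blockColumn (j, a) + 1 := by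
    simp only [blockColumn, h]
    push_cast; ring
  simpa [blockGrid, this] using segShallowVortexGrid_adj_horizontal r (blockColumn (j, a))

theorem blockGrid_adj_next_block [NeZero n] (r : Fin n) (j : ZMod n) :
    (blockGrid n).Adj (r, j, 3) (r, j + 1, 0) := by
  have : blockColumn (j + 1, 0) = blockColumn (j, 3) + 1 := by
    simp only [blockColumn, Fin.val_zero, add_zero, ZMod.natCast_mul_val_add_one,
      show ((3 : Fin 4) : ℕ) = 3 from rfl]
    push_cast; ring
  simpa [blockGrid, this] using segShallowVortexGrid_adj_horizontal r (blockColumn (j, 3))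

theorem blockGrid_adj_chord [NeZero n] (j : ZMod n) {a b : Fin 4} (h : (a : ℕ) = b + 2) :
    (blockGrid n).Adj (0, j, a) (0, j + 1, b) := by
  have ha : blockColumn (j, a) = ((4 * j.val + b : ℕ) : ZMod (4 * n)) := by
    simp only [blockColumn, h]
    push_cast; ring
  have hb : blockColumn (j + 1, b) = ((4 * j.val + b + 2 : ℕ) : ZMod (4 * n)) := by
    simp only [blockColumn, Nat.cast_add, ZMod.natCast_mul_val_add_one]
    push_cast; ring
  simpa [blockGrid, ha, hb] using
    segShallowVortexGrid_adj_chord (n := n) j.val_lt (show (b : ℕ) < 2 by omega)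

def blockWalk (r : Fin n) (j : ZMod n) : (blockGrid n).Walk (r, j, 0) (r, j, 3) :=
  .cons (blockGrid_adj_horizontal r j (a := 0) (b := 1) rfl) <|
  .cons (blockGrid_adj_horizontal r j (a := 1) (b := 2) rfl) <|
  .cons (blockGrid_adj_horizontal r j (a := 2) (b := 3) rfl) .nil

@[simp]
theorem support_blockWalk (r : Fin n) (j : ZMod n) :
    (blockWalk r j).support = [(r, j, 0), (r, j, 1), (r, j, 2), (r, j, 3)] := rfl

variable {t : ℕ}

def parity : ZMod (2 * t) →+* ZMod 2 := ZMod.castHom (dvd_mul_right 2 t) (ZMod 2)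

def partner (j : ZMod (2 * t)) : ZMod (2 * t) := if parity j = 0 then j + 1 else j - 1

theorem parity_eq_zero_or_one (j : ZMod (2 * t)) : parity j = 0 ∨ parity j = 1 := by
  generalize parity j = x
  revert x
  decide

theorem partner_partner (j : ZMod (2 * t)) : partner (partner j) = j := by
  rcases parity_eq_zero_or_one j with h | h <;> simp [partner, h]

def hostRow (i : Fin t) : Fin (2 * t) := ⟨i + 1, by omega⟩

@[simp]
theorem val_hostRow (i : Fin t) : (hostRow i : ℕ) = i + 1 := rfl

variable [NeZero t]

@[simp]
theorem hostRow_ne_zero (i : Fin t) : hostRow i ≠ 0 := Fin.ne_of_val_ne (by simp)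

def rootWalk (j : ZMod (2 * t)) : (blockGrid (2 * t)).Walk (0, j, 0) (0, j, 3) :=
  have h : (hostRow (0 : Fin t) : ℕ) = (0 : Fin (2 * t)) + 1 := by simp
  .cons (blockGrid_adj_vertical h _)
    ((blockWalk (hostRow 0) j).concat (blockGrid_adj_vertical h _).symm)

@[simp]
theorem support_rootWalk (j : ZMod (2 * t)) :
    (rootWalk j).support = (0, j, 0) :: (blockWalk (hostRow 0) j).support ++ [(0, j, 3)] := rfl

def branchSet (i : Fin t) (j : ZMod (2 * t)) : Set (Fin (2 * t) × ZMod (2 * t) × Fin 4) :=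
  if i = 0 then {c | c ∈ (rootWalk j).support} ∪ {(0, partner j, 1), (0, partner j, 2)}
  else {c | c ∈ (blockWalk (hostRow i) j).support}

theorem hostRow_mem_branchSet (i : Fin t) (j : ZMod (2 * t)) (a : Fin 4) :
    (hostRow i, j, a) ∈ branchSet i j := by
  by_cases hi : i = 0
  · subst hi
    fin_cases a <;> simp [branchSet]
  · fin_cases a <;> simp [branchSet, hi]

theorem exists_adj_rootWalk_partner (j : ZMod (2 * t)) :
    ∃ v ∈ (rootWalk j).support, ∃ w ∈ ({(0, partner j, 1), (0, partner j, 2)} : Set _),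
      (blockGrid (2 * t)).Adj v w := by
  rcases parity_eq_zero_or_one j with h | h
  · refine ⟨(0, j, 3), by simp, (0, partner j, 1), by simp, ?_⟩
    simpa [partner, h] using blockGrid_adj_chord j (a := 3) (b := 1) rfl
  · refine ⟨(0, j, 0), by simp, (0, partner j, 2), by simp, ?_⟩
    have hchord := blockGrid_adj_chord (j - 1) (a := 2) (b := 0) rfl
    rw [sub_add_cancel] at hchord
    simpa [partner, h] using hchord.symm

theorem branchSet_connected (i : Fin t) (j : ZMod (2 * t)) :
    ((blockGrid (2 * t)).induce (branchSet i j)).Connected := by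
  by_cases hi : i = 0
  · rw [branchSet, if_pos hi]
    obtain ⟨v, hv, w, hw, hvw⟩ := exists_adj_rootWalk_partner j
    exact connected_induce_union (rootWalk j).connected_induce_support.preconnected
      (induce_pair_connected_of_adj (blockGrid_adj_horizontal 0 _ rfl)).preconnected hv hw hvw
  · rw [branchSet, if_neg hi]
    exact (blockWalk _ j).connected_induce_support

/-- Rows `0` and `1` get the same label, since `0 - 1 = 0` in `ℕ`. -/
def branchLabel (c : Fin (2 * t) × ZMod (2 * t) × Fin 4) : ℕ × ZMod (2 * t) :=
  ((c.1 : ℕ) - 1, if (c.1 : ℕ) = 0 ∧ (c.2.2 = 1 ∨ c.2.2 = 2) then partner c.2.1 else c.2.1)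

theorem branchLabel_of_mem {i : Fin t} {j : ZMod (2 * t)} :
    ∀ c ∈ branchSet i j, branchLabel c = ((i : ℕ), j) := by
  by_cases hi : i = 0
  · subst hi
    simp [branchSet, branchLabel, partner_partner]
  · simp [branchSet, hi, branchLabel]

theorem branchSet_disjoint {u v : Fin t × ZMod (2 * t)} (huv : u ≠ v) :
    Disjoint (branchSet u.1 u.2) (branchSet v.1 v.2) := by
  refine Set.disjoint_left.2 fun c hu hv => huv ?_
  have h := (branchLabel_of_mem c hu).symm.trans (branchLabel_of_mem c hv)
  simp only [Prod.mk.injEq] at h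
  exact Prod.ext (Fin.ext h.1) h.2

theorem exists_adj_branchSet_add_two (j : ZMod (2 * t)) :
    ∃ a ∈ branchSet 0 j, ∃ b ∈ branchSet 0 (j + 2), (blockGrid (2 * t)).Adj a b := by
  rcases parity_eq_zero_or_one j with h | h
  · refine ⟨(0, j + 1, 2), by simp [branchSet, partner, h], (0, j + 2, 0), by simp [branchSet],
      ?_⟩
    have hchord := blockGrid_adj_chord (j + 1) (a := 2) (b := 0) rfl
    rwa [add_assoc, one_add_one_eq_two] at hchord
  · refine ⟨(0, j, 3), by simp [branchSet], (0, j + 1, 1), ?_,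
      blockGrid_adj_chord j (a := 3) (b := 1) rfl⟩
    have h2 : parity (2 : ZMod (2 * t)) = 0 := by rw [map_ofNat]; rfl
    have hp : partner (j + 2) = j + 1 := by
      rw [partner, map_add, h, h2, add_zero, if_neg one_ne_zero]
      ring
    simp [branchSet, hp]

theorem exists_adj_branchSet {u v : Fin t × ZMod (2 * t)}
    (h : (u.1 = v.1 ∧ v.2 = u.2 + 1) ∨ (u.2 = v.2 ∧ (v.1 : ℕ) = (u.1 : ℕ) + 1) ∨
      ((u.1 : ℕ) = 0 ∧ (v.1 : ℕ) = 0 ∧ v.2 = u.2 + 2)) :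
    ∃ a ∈ branchSet u.1 u.2, ∃ b ∈ branchSet v.1 v.2, (blockGrid (2 * t)).Adj a b := by
  obtain ⟨i, j⟩ := u
  obtain ⟨i', j'⟩ := v
  rcases h with ⟨rfl, rfl⟩ | ⟨rfl, h⟩ | ⟨hi, hi', rfl⟩
  · exact ⟨_, hostRow_mem_branchSet i j 3, _, hostRow_mem_branchSet i (j + 1) 0,
      blockGrid_adj_next_block _ j⟩
  · exact ⟨_, hostRow_mem_branchSet i j 0, _, hostRow_mem_branchSet i' j 0,
      blockGrid_adj_vertical (by simpa using h) _⟩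
  · obtain rfl : i = 0 := Fin.ext hi
    obtain rfl : i' = 0 := Fin.ext hi'
    exact exists_adj_branchSet_add_two j

theorem exists_adj_branchSet_of_adj {u v : Fin t × ZMod (2 * t)}
    (huv : (shallowVortexGrid t).Adj u v) :
    ∃ a ∈ branchSet u.1 u.2, ∃ b ∈ branchSet v.1 v.2, (blockGrid (2 * t)).Adj a b := by
  obtain ⟨-, h | h⟩ := huv
  · exact exists_adj_branchSet h
  · obtain ⟨a, ha, b, hb, hab⟩ := exists_adj_branchSet h
    exact ⟨b, hb, a, ha, hab.symm⟩

end SegShallowVortexGrid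

/-- For every `t ≥ 1`, the shallow vortex grid `H_t` is a minor of the segregated
shallow vortex grid of order `2t`. -/
theorem shallowVortexGrid_isMinor_segShallowVortexGrid (t : ℕ) (ht : 1 ≤ t) :
    IsMinorOf (shallowVortexGrid t) (segShallowVortexGrid (2 * t)) := by
  have : NeZero t := ⟨by omega⟩
  open SegShallowVortexGrid in
  exact IsMinorOf.map
    ⟨fun v => branchSet v.1 v.2, fun v => branchSet_connected v.1 v.2,
      fun _ _ => branchSet_disjoint, fun _ _ => exists_adj_branchSet_of_adj⟩
    (Hom.comap _ _) (injective_id.prodMap blockColumn_injective)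
end

section
/- For every integer t ≥ 1, the segregated shallow vortex grid of order t is a minor of the shallow vortex grid H_{2t}. -/
/-- The induced subgraph on a singleton set is connected. -/
lemma induce_singleton_connected {W : Type*} (G : SimpleGraph W) (a : W) :
    (G.induce ({a} : Set W)).Connected := by
  haveI : Nonempty ({a} : Set W) := ⟨⟨a, rfl⟩⟩
  refine ⟨?_⟩
  intro x y
  have hx : (x : W) = a := x.2
  have hy : (y : W) = a := y.2
  have : x = y := Subtype.ext (hx.trans hy.symm)
  rw [this]

/-- For every `t ≥ 1`, the segregated shallow vortex grid of order `t` is a minor of the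
shallow vortex grid `H_{2t}`. -/
theorem segShallowVortexGrid_isMinor_shallowVortexGrid (t : ℕ) (ht : 1 ≤ t) :
    IsMinorOf (segShallowVortexGrid t) (shallowVortexGrid (2 * t)) := by
  haveI : NeZero (4 * t) := ⟨by omega⟩
  -- the canonical identification `ZMod (4t) → ZMod (2·(2t))`
  set M := 2 * (2 * t) with hM
  have hMN : M = 4 * t := by omega
  set f : ZMod (4 * t) → ZMod M := fun x => ((x.val : ℕ) : ZMod M) with hf
  have hzero : ((4 * t : ℕ) : ZMod M) = 0 := by
    rw [← hMN]; exact ZMod.natCast_self M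
  have hmod : ∀ k : ℕ, ((k % (4 * t) : ℕ) : ZMod M) = (k : ZMod M) := by
    intro k
    conv_rhs => rw [← Nat.mod_add_div k (4 * t)]
    rw [Nat.cast_add, Nat.cast_mul, hzero, zero_mul, add_zero]
  have hcast : ∀ c : ℕ, f ((c : ℕ) : ZMod (4 * t)) = (c : ZMod M) := by
    intro c
    rw [hf]
    simp only [ZMod.val_natCast]
    exact hmod c
  have hadd : ∀ x y : ZMod (4 * t), f (x + y) = f x + f y := by
    intro x y
    rw [hf]
    simp only [ZMod.val_add]
    rw [hmod]
    push_cast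
    rfl
  have hone : f 1 = 1 := by
    have := hcast 1
    simpa using this
  have ftwo : f 2 = 2 := by
    have := hcast 2
    simpa using this
  have hinj : Function.Injective f := by
    intro a b hab
    have : a.val = b.val := by
      have ha : (a.val : ZMod M).val = a.val := ZMod.val_cast_of_lt (by
        have := ZMod.val_lt a; omega)
      have hb : (b.val : ZMod M).val = b.val := ZMod.val_cast_of_lt (by
        have := ZMod.val_lt b; omega)
      rw [hf] at hab
      calc a.val = (a.val : ZMod M).val := ha.symm
        _ = (b.val : ZMod M).val := congrArg ZMod.val hab
        _ = b.val := hb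
    exact ZMod.val_injective _ this
  -- the vertex embedding
  set F : Fin t × ZMod (4 * t) → Fin (2 * t) × ZMod M :=
    fun v => (⟨v.1.1, by omega⟩, f v.2) with hF
  have hFinj : Function.Injective F := by
    intro u v huv
    rw [hF] at huv
    simp only [Prod.mk.injEq, Fin.mk.injEq] at huv
    exact Prod.ext (Fin.ext huv.1) (hinj huv.2)
  refine ⟨fun v => {F v}, fun v => induce_singleton_connected _ _, ?_, ?_⟩
  · intro u v huv
    simp only [Set.disjoint_singleton]
    exact fun h => huv (hFinj h)
  · intro u v huv
    refine ⟨F u, rfl, F v, rfl, ?_⟩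
    rw [segShallowVortexGrid, SimpleGraph.fromRel_adj] at huv
    rw [shallowVortexGrid, SimpleGraph.fromRel_adj]
    obtain ⟨hne, hrel⟩ := huv
    refine ⟨fun h => hne (hFinj h), ?_⟩
    have key : ∀ p q : Fin t × ZMod (4 * t),
        ((p.1 = q.1 ∧ q.2 = p.2 + 1) ∨
          (p.2 = q.2 ∧ (q.1 : ℕ) = (p.1 : ℕ) + 1) ∨
          ((p.1 : ℕ) = 0 ∧ (q.1 : ℕ) = 0 ∧ ∃ m : ℕ, m < t ∧
            ((p.2 = ((4 * m : ℕ) : ZMod (4 * t)) ∧ q.2 = ((4 * m + 2 : ℕ) : ZMod (4 * t))) ∨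
             (p.2 = ((4 * m + 1 : ℕ) : ZMod (4 * t)) ∧
              q.2 = ((4 * m + 3 : ℕ) : ZMod (4 * t)))))) →
        (((F p).1 = (F q).1 ∧ (F q).2 = (F p).2 + 1) ∨
          ((F p).2 = (F q).2 ∧ ((F q).1 : ℕ) = ((F p).1 : ℕ) + 1) ∨
          (((F p).1 : ℕ) = 0 ∧ ((F q).1 : ℕ) = 0 ∧ (F q).2 = (F p).2 + 2)) := by
      rintro p q (⟨h1, h2⟩ | ⟨h1, h2⟩ | ⟨h1, h2, m, hm, (⟨ha, hb⟩ | ⟨ha, hb⟩)⟩)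
      · refine Or.inl ⟨by rw [hF]; simp [h1], ?_⟩
        show f q.2 = f p.2 + 1
        rw [h2, hadd, hone]
      · refine Or.inr (Or.inl ⟨?_, ?_⟩)
        · show f p.2 = f q.2; rw [h1]
        · show (q.1 : ℕ) = (p.1 : ℕ) + 1; exact h2
      · refine Or.inr (Or.inr ⟨h1, h2, ?_⟩)
        show f q.2 = f p.2 + 2
        rw [ha, hb, hcast, hcast]
        push_cast
        ring
      · refine Or.inr (Or.inr ⟨h1, h2, ?_⟩)
        show f q.2 = f p.2 + 2
        rw [ha, hb, hcast, hcast]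
        push_cast
        ring
    exact hrel.imp (key u v) (key v u)
end

section
/- The complete graph K_7 on seven vertices is a minor of the shallow vortex grid H_18. -/
set_option maxRecDepth 4000000
set_option maxHeartbeats 4000000

section Aux

abbrev V18 : Type := Fin 18 × ZMod 36

instance decAdj : DecidableRel (shallowVortexGrid 18).Adj := fun p q =>
  decidable_of_iff _ ((SimpleGraph.fromRel_adj _ p q).symm)

private def lA : List V18 := [(⟨1, by decide⟩, (20 : ZMod 36)), (⟨0, by decide⟩, (20 : ZMod 36)), (⟨0, by decide⟩, (22 : ZMod 36)), (⟨0, by decide⟩, (24 : ZMod 36)), (⟨1, by decide⟩, (24 : ZMod 36)), (⟨1, by decide⟩, (25 : ZMod 36)), (⟨1, by decide⟩, (26 : ZMod 36)), (⟨0, by decide⟩, (26 : ZMod 36)), (⟨0, by decide⟩, (28 : ZMod 36)), (⟨0, by decide⟩, (30 : ZMod 36)), (⟨1, by decide⟩, (30 : ZMod 36)), (⟨1, by decide⟩, (31 : ZMod 36)), (⟨0, by decide⟩, (31 : ZMod 36)), (⟨0, by decide⟩, (33 : ZMod 36)), (⟨0, by decide⟩, (35 : ZMod 36)), (⟨1,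 by decide⟩, (35 : ZMod 36)), (⟨1, by decide⟩, (0 : ZMod 36)), (⟨1, by decide⟩, (1 : ZMod 36))]
private def lB : List V18 := [(⟨2, by decide⟩, (20 : ZMod 36)), (⟨2, by decide⟩, (21 : ZMod 36)), (⟨1, by decide⟩, (21 : ZMod 36)), (⟨0, by decide⟩, (21 : ZMod 36)), (⟨0, by decide⟩, (23 : ZMod 36)), (⟨1, by decide⟩, (23 : ZMod 36)), (⟨2, by decide⟩, (23 : ZMod 36)), (⟨2, by decide⟩, (24 : ZMod 36)), (⟨2, by decide⟩, (25 : ZMod 36)), (⟨2, by decide⟩, (26 : ZMod 36)), (⟨2, by decide⟩, (27 : ZMod 36)), (⟨1, by decide⟩, (27 : ZMod 36)), (⟨0, by decide⟩, (27 : ZMod 36)), (⟨0, by decide⟩, (29 : ZMod 36)), (⟨1, by decide⟩, (29 : ZMod 36)), (⟨2, by decide⟩, (29 : ZMod 36)), (⟨2, by decide⟩, (30 : ZMod 36)), (⟨2, by decide⟩, (31 : ZMod 36)), (⟨2, by decide⟩, (32 : ZMod 36)), (⟨1, by decide⟩, (32 : ZMod 36)), (⟨0, by decide⟩, (32 : ZMod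 36)), (⟨0, by decide⟩, (34 : ZMod 36)), (⟨1, by decide⟩, (34 : ZMod 36)), (⟨2, by decide⟩, (34 : ZMod 36)), (⟨2, by decide⟩, (35 : ZMod 36)), (⟨2, by decide⟩, (0 : ZMod 36)), (⟨2, by decide⟩, (1 : ZMod 36)), (⟨2, by decide⟩, (2 : ZMod 36)), (⟨1, by decide⟩, (2 : ZMod 36)), (⟨1, by decide⟩, (3 : ZMod 36))]
private def lC : List V18 := [(⟨1, by decide⟩, (22 : ZMod 36)), (⟨2, by decide⟩, (22 : ZMod 36)), (⟨3, by decide⟩, (22 : ZMod 36)), (⟨3, by decide⟩, (21 : ZMod 36)), (⟨3, by decide⟩, (20 : ZMod 36)), (⟨3, by decide⟩, (19 : ZMod 36)), (⟨2, by decide⟩, (19 : ZMod 36)), (⟨1, by decide⟩, (19 : ZMod 36)), (⟨1, by decide⟩, (18 : ZMod 36)), (⟨1, by decide⟩, (17 : ZMod 36)), (⟨1, by decide⟩, (16 : ZMod 36)), (⟨0, by decide⟩, (16 : ZMod 36)), (⟨0, by decide⟩, (14 : ZMod 36)), (⟨0, by decide⟩, (12 : ZMod 36)), (⟨1, by decide⟩,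 (12 : ZMod 36)), (⟨1, by decide⟩, (11 : ZMod 36)), (⟨1, by decide⟩, (10 : ZMod 36))]
private def lD : List V18 := [(⟨1, by decide⟩, (14 : ZMod 36)), (⟨2, by decide⟩, (14 : ZMod 36)), (⟨3, by decide⟩, (14 : ZMod 36)), (⟨3, by decide⟩, (15 : ZMod 36)), (⟨3, by decide⟩, (16 : ZMod 36)), (⟨3, by decide⟩, (17 : ZMod 36)), (⟨4, by decide⟩, (17 : ZMod 36)), (⟨5, by decide⟩, (17 : ZMod 36)), (⟨5, by decide⟩, (18 : ZMod 36)), (⟨5, by decide⟩, (19 : ZMod 36)), (⟨5, by decide⟩, (20 : ZMod 36)), (⟨5, by decide⟩, (21 : ZMod 36)), (⟨5, by decide⟩, (22 : ZMod 36)), (⟨5, by decide⟩, (23 : ZMod 36)), (⟨5, by decide⟩, (24 : ZMod 36)), (⟨5, by decide⟩, (25 : ZMod 36)), (⟨5, by decide⟩, (26 : ZMod 36)), (⟨5, by decide⟩, (27 : ZMod 36)), (⟨5, by decide⟩, (28 : ZMod 36)), (⟨4, by decide⟩, (28 : ZMod 36)), (⟨4, by decide⟩, (29 : ZMod 36)),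 (⟨3, by decide⟩, (29 : ZMod 36)), (⟨3, by decide⟩, (30 : ZMod 36)), (⟨3, by decide⟩, (31 : ZMod 36)), (⟨3, by decide⟩, (32 : ZMod 36)), (⟨3, by decide⟩, (33 : ZMod 36)), (⟨2, by decide⟩, (33 : ZMod 36)), (⟨1, by decide⟩, (33 : ZMod 36)), (⟨2, by decide⟩, (33 : ZMod 36)), (⟨3, by decide⟩, (33 : ZMod 36)), (⟨3, by decide⟩, (34 : ZMod 36)), (⟨3, by decide⟩, (35 : ZMod 36)), (⟨3, by decide⟩, (0 : ZMod 36)), (⟨3, by decide⟩, (1 : ZMod 36)), (⟨3, by decide⟩, (2 : ZMod 36)), (⟨3, by decide⟩, (3 : ZMod 36)), (⟨3, by decide⟩, (4 : ZMod 36)), (⟨2, by decide⟩, (4 : ZMod 36)), (⟨1, by decide⟩, (4 : ZMod 36)), (⟨1, by decide⟩, (5 : ZMod 36))]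
private def lE : List V18 := [(⟨1, by decide⟩, (28 : ZMod 36)), (⟨2, by decide⟩, (28 : ZMod 36)), (⟨3, by decide⟩, (28 : ZMod 36)), (⟨3, by decide⟩, (27 : ZMod 36)), (⟨3, by decide⟩, (26 : ZMod 36)), (⟨3, by decide⟩, (25 : ZMod 36)), (⟨3, by decide⟩, (24 : ZMod 36)), (⟨3, by decide⟩, (23 : ZMod 36)), (⟨4, by decide⟩, (23 : ZMod 36)), (⟨4, by decide⟩, (22 : ZMod 36)), (⟨4, by decide⟩, (21 : ZMod 36)), (⟨4, by decide⟩, (20 : ZMod 36)), (⟨4, by decide⟩, (19 : ZMod 36)), (⟨4, by decide⟩, (18 : ZMod 36)), (⟨3, by decide⟩, (18 : ZMod 36)), (⟨2, by decide⟩, (18 : ZMod 36)), (⟨2, by decide⟩, (17 : ZMod 36)), (⟨2, by decide⟩, (16 : ZMod 36)), (⟨2, by decide⟩, (15 : ZMod 36)), (⟨1, by decide⟩, (15 : ZMod 36)), (⟨0, by decide⟩, (15 : ZMod 36)), (⟨0, by decide⟩, (13 : ZMod 36)), (⟨1, by decide⟩, (13 : ZMod 36)), (⟨2, by decide⟩,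 (13 : ZMod 36)), (⟨2, by decide⟩, (12 : ZMod 36)), (⟨2, by decide⟩, (11 : ZMod 36)), (⟨2, by decide⟩, (10 : ZMod 36)), (⟨2, by decide⟩, (9 : ZMod 36)), (⟨1, by decide⟩, (9 : ZMod 36)), (⟨1, by decide⟩, (8 : ZMod 36))]
private def l6 : List V18 := [(⟨0, by decide⟩, (1 : ZMod 36)), (⟨0, by decide⟩, (3 : ZMod 36)), (⟨0, by decide⟩, (5 : ZMod 36)), (⟨0, by decide⟩, (7 : ZMod 36)), (⟨0, by decide⟩, (9 : ZMod 36)), (⟨0, by decide⟩, (11 : ZMod 36))]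
private def l7 : List V18 := [(⟨0, by decide⟩, (0 : ZMod 36)), (⟨0, by decide⟩, (2 : ZMod 36)), (⟨0, by decide⟩, (4 : ZMod 36)), (⟨0, by decide⟩, (6 : ZMod 36)), (⟨0, by decide⟩, (8 : ZMod 36)), (⟨0, by decide⟩, (10 : ZMod 36))]

private def Ls : Fin 7 → List V18 := ![lA, lB, lC, lD, lE, l6, l7]

private def adjB (p q : V18) : Bool := decide ((shallowVortexGrid 18).Adj p q)

private def chk : V18 → List V18 → Bool
  | _, [] => true
  | a, b :: l => adjB a b && chk b l

private lemma chain_of_chk : ∀ (a : V18) (l : List V18), chk a l = true →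
    List.Chain (shallowVortexGrid 18).Adj a l := by
  intro a l
  induction l generalizing a with
  | nil => intro _; exact List.Chain.nil
  | cons b l ih =>
      intro h
      rw [chk, Bool.and_eq_true] at h
      exact List.Chain.cons (of_decide_eq_true h.1) (ih b h.2)

/-- Reachability of every list element from the head, inside the induced graph. -/
private lemma reach_head {W : Type*} (G : SimpleGraph W) (X : Set W) :
    ∀ (l : List W) (a : W) (_ : List.Chain G.Adj a l) (ha : a ∈ X)
      (_ : ∀ x ∈ l, x ∈ X) (b : W) (hb : b ∈ X) (_ : b ∈ a :: l),
      (G.induce X).Reachable ⟨a, ha⟩ ⟨b, hb⟩ := by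
  intro l
  induction l with
  | nil =>
      intro a _ ha _ b hb hbl
      rcases List.mem_singleton.mp hbl with rfl
      exact SimpleGraph.Reachable.refl _
  | cons c l ih =>
      intro a hch ha hl b hb hbl
      rcases List.chain_cons.mp hch with ⟨hac, hcl⟩
      have hc : c ∈ X := hl c (by simp)
      have hstep : (G.induce X).Reachable ⟨a, ha⟩ ⟨c, hc⟩ :=
        SimpleGraph.Adj.reachable hac
      rcases List.mem_cons.mp hbl with rfl | hbl'
      · exact SimpleGraph.Reachable.refl _
      · exact hstep.trans (ih c hcl hc (fun x hx => hl x (by simp [hx])) b hb hbl')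

private lemma conn_of_list {W : Type*} (G : SimpleGraph W) (a : W) (l : List W)
    (hch : List.Chain G.Adj a l) :
    (G.induce {x | x ∈ a :: l}).Connected := by
  rw [SimpleGraph.connected_iff]
  refine ⟨fun u v => ?_, ⟨⟨a, by simp⟩⟩⟩
  have ha : a ∈ {x | x ∈ a :: l} := by simp
  have hl : ∀ x ∈ l, x ∈ {x | x ∈ a :: l} := fun x hx => by simp [hx]
  have hu := reach_head G _ l a hch ha hl u.1 u.2 u.2
  have hv := reach_head G _ l a hch ha hl v.1 v.2 v.2
  exact hu.symm.trans hv

private def chkl : List V18 → Bool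
  | [] => true
  | a :: l => chk a l

private lemma conn_of_chk (l : List V18) (hne : l ≠ []) (h : chkl l = true) :
    ((shallowVortexGrid 18).induce {x | x ∈ l}).Connected := by
  cases l with
  | nil => exact absurd rfl hne
  | cons a l => exact conn_of_list _ a l (chain_of_chk a l h)

private lemma conn_lA : ((shallowVortexGrid 18).induce {x | x ∈ lA}).Connected :=
  conn_of_chk lA (by decide) (by decide)
  

private lemma conn_lB : ((shallowVortexGrid 18).induce {x | x ∈ lB}).Connected :=
  conn_of_chk lB (by decide) (by decide)
  

private lemma conn_lC : ((shallowVortexGrid 18).induce {x | x ∈ lC}).Connected :=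
  conn_of_chk lC (by decide) (by decide)
  

private lemma conn_lD : ((shallowVortexGrid 18).induce {x | x ∈ lD}).Connected :=
  conn_of_chk lD (by decide) (by decide)
  

private lemma conn_lE : ((shallowVortexGrid 18).induce {x | x ∈ lE}).Connected :=
  conn_of_chk lE (by decide) (by decide)
  

private lemma conn_l6 : ((shallowVortexGrid 18).induce {x | x ∈ l6}).Connected :=
  conn_of_chk l6 (by decide) (by decide)
  

private lemma conn_l7 : ((shallowVortexGrid 18).induce {x | x ∈ l7}).Connected :=
  conn_of_chk l7 (by decide) (by decide)
  

end Aux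

/-- The complete graph `K₇` is a minor of the shallow vortex grid `H₁₈`. -/
theorem K7_isMinor_shallowVortexGrid_18 :
    IsMinorOf (⊤ : SimpleGraph (Fin 7)) (shallowVortexGrid 18) := by
  refine ⟨fun v => {x | x ∈ Ls v}, ?_, ?_, ?_⟩
  · intro v
    fin_cases v
    · exact conn_lA
    · exact conn_lB
    · exact conn_lC
    · exact conn_lD
    · exact conn_lE
    · exact conn_l6
    · exact conn_l7
  · have hd : ∀ u v : Fin 7, u ≠ v → ∀ x ∈ Ls u, x ∉ Ls v := by decide
    intro u v huv
    exact Set.disjoint_left.mpr fun {x} hx hx' => hd u v huv x hx hx'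
  · have hk : ∀ u v : Fin 7, u ≠ v →
        ∃ a ∈ Ls u, ∃ b ∈ Ls v, (shallowVortexGrid 18).Adj a b := by decide
    intro u v huv
    obtain ⟨a, ha, b, hb, hab⟩ := hk u v huv.ne
    exact ⟨a, ha, b, hb, hab⟩
end

section
/- There exists a function g : ℕ × ℕ → ℕ such that for every t ≥ 1 and every s ≥ 3, the (t×s)-cylindrical grid ring blowup is a minor of the shallow vortex grid H_{g(t,s)}. -/
/-- The `(t × s)`-cylindrical grid: `t` concentric cycles of length `s`,
with vertical edges between consecutive cycles. -/
def cylGrid (t s : ℕ) : SimpleGraph (Fin t × ZMod s) :=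
  SimpleGraph.fromRel fun p q =>
    (p.1 = q.1 ∧ q.2 = p.2 + 1) ∨ (p.2 = q.2 ∧ (q.1 : ℕ) = (p.1 : ℕ) + 1)

/-- The ring blowup of `(G, Q)`: for each `u ∈ Q` add a new vertex `v_u` adjacent to `u`,
to all neighbors of `u`, and to `v_w` for every neighbor `w ∈ Q` of `u`. -/
def ringBlowup {V : Type*} (G : SimpleGraph V) (Q : Set V) : SimpleGraph (V ⊕ ↥Q) :=
  SimpleGraph.fromRel fun x y =>
    match x, y with
    | Sum.inl a, Sum.inl b => G.Adj a b
    | Sum.inl a, Sum.inr u => a = (u : V) ∨ G.Adj a (u : V)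
    | Sum.inr u, Sum.inr w => G.Adj (u : V) (w : V)
    | _, _ => False

/-- The `(t × s)`-cylindrical grid ring blowup: the ring blowup of the
`(t × s)`-cylindrical grid at the vertex set of its outermost cycle. -/
def cylGridRingBlowup (t s : ℕ) : SimpleGraph ((Fin t × ZMod s) ⊕ ↥{p : Fin t × ZMod s | (p.1 : ℕ) = t - 1}) :=
  ringBlowup (cylGrid t s) {p : Fin t × ZMod s | (p.1 : ℕ) = t - 1}

namespace CGB

section
variable (t s : ℕ)
abbrev Kk : ℕ := (t + 3) * s
abbrev Nn : ℕ := 2 * Kk t s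
abbrev Wt := Fin (Kk t s) × ZMod (Nn t s)
abbrev Vt := Fin t × ZMod s
abbrev Qt : Set (Vt t s) := {p : Vt t s | (p.1 : ℕ) = t - 1}
end

variable {t s : ℕ}

lemma K_pos (hs : 0 < s) : 0 < Kk t s := Nat.mul_pos (by omega) hs

def mk (hs : 0 < s) (r c : ℕ) : Wt t s :=
  (⟨r % Kk t s, Nat.mod_lt _ (K_pos hs)⟩, (c : ZMod (Nn t s)))

lemma mk_row (hs : 0 < s) {r : ℕ} (c : ℕ) (h : r < Kk t s) :
    (((mk hs r c : Wt t s).1 : Fin (Kk t s)) : ℕ) = r := Nat.mod_eq_of_lt h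

lemma mk_col (hs : 0 < s) (r c : ℕ) :
    ((mk hs r c : Wt t s).2) = (c : ZMod (Nn t s)) := rfl

lemma mk_congr (hs : 0 < s) {r c c' : ℕ} (h : c % Nn t s = c' % Nn t s) :
    (mk hs r c : Wt t s) = mk hs r c' := by
  unfold mk
  exact Prod.ext rfl (by rw [ZMod.natCast_eq_natCast_iff']; exact h)

lemma N_big (hs : 0 < s) : 6 ≤ Nn t s := by
  have h1 : t+3 ≤ (t+3) * s := Nat.le_mul_of_pos_right _ hs
  simp only [Nn, Kk]; omega

-- adjacency helpers
lemma mk_ne_shift (hs : 0 < s) {r r' c : ℕ} (d : ℕ) (hd : 0 < d) (hdN : d < Nn t s) :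
    (mk hs r c : Wt t s) ≠ mk hs r' (c + d) := by
  intro h
  have h2 := congrArg Prod.snd h
  simp only [mk_col] at h2
  rw [ZMod.natCast_eq_natCast_iff'] at h2
  have h3 : (Nn t s) ∣ (c + d) - c := (Nat.modEq_iff_dvd' (by omega)).mp h2
  simp only [Nat.add_sub_cancel_left] at h3
  have := Nat.le_of_dvd hd h3
  omega

lemma mk_ne_row (hs : 0 < s) {r r' : ℕ} (c c' : ℕ) (hr : r < Kk t s) (hr' : r' < Kk t s)
    (h : r ≠ r') : (mk hs r c : Wt t s) ≠ mk hs r' c' := by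
  intro heq
  have h1 := congrArg (fun x : Wt t s => (x.1 : ℕ)) heq
  simp only [mk_row hs _ hr, mk_row hs _ hr'] at h1
  exact h h1

lemma adjH (hs : 0 < s) {r : ℕ} (c : ℕ) (hr : r < Kk t s) :
    (shallowVortexGrid (Kk t s)).Adj (mk hs r c) (mk hs r (c+1)) := by
  have hN := N_big (t := t) hs
  rw [shallowVortexGrid, SimpleGraph.fromRel_adj]
  refine ⟨mk_ne_shift hs 1 (by omega) (by omega), ?_⟩
  left; left
  refine ⟨rfl, ?_⟩
  simp only [mk_col]
  push_cast
  ring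

lemma adjC (hs : 0 < s) (c : ℕ) :
    (shallowVortexGrid (Kk t s)).Adj (mk hs 0 c) (mk hs 0 (c+2)) := by
  have hN := N_big (t := t) hs
  rw [shallowVortexGrid, SimpleGraph.fromRel_adj]
  refine ⟨mk_ne_shift hs 2 (by omega) (by omega), ?_⟩
  left; right; right
  refine ⟨mk_row hs c (K_pos hs), mk_row hs (c+2) (K_pos hs), ?_⟩
  simp only [mk_col]
  push_cast
  ring

lemma adjV (hs : 0 < s) {r : ℕ} (c : ℕ) (hr : r + 1 < Kk t s) :
    (shallowVortexGrid (Kk t s)).Adj (mk hs r c) (mk hs (r+1) c) := by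
  rw [shallowVortexGrid, SimpleGraph.fromRel_adj]
  refine ⟨mk_ne_row hs c c (by omega) hr (by omega), ?_⟩
  left; right; left
  exact ⟨rfl, by rw [mk_row hs (r := r+1) c hr, mk_row hs (r := r) c (by omega)]⟩

-- branch chains
def b0 (t : ℕ) {s : ℕ} (j : ZMod s) : ℕ := 2*(t+3)*j.val

def chainU (hs : 0 < s) (j : ZMod s) (i : ℕ) : Wt t s :=
  if i < t+3 then mk hs 0 (b0 t j + 2*i) else mk hs 1 (b0 t j + (2*t+4) + (i - (t+3)))

def chainV (hs : 0 < s) (j : ZMod s) (i : ℕ) : Wt t s := mk hs 0 (b0 t j + (2*i+1))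

def chainM (hs : 0 < s) (j : ZMod s) (i : ℕ) : Wt t s :=
  if i ≤ 2 then mk hs 2 (b0 t j + i)
  else if i ≤ 4 then mk hs 1 (b0 t j + (i-1))
  else mk hs 2 (b0 t j + (i-2))

def chainI (hs : 0 < s) (r0 : ℕ) (j : ZMod s) (i : ℕ) : Wt t s := mk hs r0 (b0 t j + i)

def chain (hs : 0 < s) : (Vt t s ⊕ Qt t s) → ℕ → Wt t s
  | .inl a => if (a.1 : ℕ) = t-1 then chainU hs a.2
      else if (a.1 : ℕ) = t-2 then chainM hs a.2
      else chainI hs (t - (a.1 : ℕ)) a.2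
  | .inr q => chainV hs q.1.2

def clen (t s : ℕ) : (Vt t s ⊕ Qt t s) → ℕ
  | .inl a => if (a.1 : ℕ) = t-1 then (t+3)+4 else if (a.1 : ℕ) = t-2 then 2*(t+3)+2 else 2*(t+3)
  | .inr _ => t+3

lemma K_ge (hs : 0 < s) : t + 3 ≤ Kk t s := Nat.le_mul_of_pos_right _ hs

lemma chainU_adj (hs : 0 < s) (j : ZMod s) (i : ℕ) (h : i + 1 < (t+3)+4) :
    (shallowVortexGrid (Kk t s)).Adj (chainU hs j i) (chainU hs j (i+1)) := by
  have hK := K_ge (t := t) hs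
  rcases Nat.lt_trichotomy (i+1) (t+3) with h1 | h1 | h1
  · rw [chainU, if_pos (by omega), chainU, if_pos h1]
    have e : b0 t j + 2*(i+1) = (b0 t j + 2*i) + 2 := by ring
    rw [e]; exact adjC hs _
  · rw [chainU, if_pos (by omega), chainU, if_neg (by omega)]
    have e1 : 2*i = 2*t+4 := by omega
    have e2 : i + 1 - (t+3) = 0 := by omega
    rw [e1, e2, Nat.add_zero]
    exact adjV hs _ (by omega)
  · rw [chainU, if_neg (by omega), chainU, if_neg (by omega)]
    have e : b0 t j + (2*t+4) + (i+1 - (t+3)) = (b0 t j + (2*t+4) + (i - (t+3))) + 1 := by omega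
    rw [e]; exact adjH hs _ (by omega)

lemma chainV_adj (hs : 0 < s) (j : ZMod s) (i : ℕ) :
    (shallowVortexGrid (Kk t s)).Adj (chainV hs j i) (chainV hs j (i+1)) := by
  rw [chainV, chainV]
  have e : b0 t j + (2*(i+1)+1) = (b0 t j + (2*i+1)) + 2 := by ring
  rw [e]; exact adjC hs _

lemma chainM_adj (hs : 0 < s) (j : ZMod s) (i : ℕ) :
    (shallowVortexGrid (Kk t s)).Adj (chainM hs j i) (chainM hs j (i+1)) := by
  have hK := K_ge (t := t) hs
  rcases Nat.lt_trichotomy i 2 with h1 | h1 | h1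
  · rw [chainM, if_pos (by omega), chainM, if_pos (by omega)]
    exact adjH hs _ (by omega)
  · rw [chainM, if_pos (by omega), chainM, if_neg (by omega), if_pos (by omega)]
    have e : i + 1 - 1 = i := by omega
    rw [e, h1]
    exact (adjV hs _ (by omega)).symm
  · rcases Nat.lt_trichotomy i 4 with h2 | h2 | h2
    · have e3 : i = 3 := by omega
      rw [chainM, if_neg (by omega), if_pos (by omega), chainM, if_neg (by omega),
        if_pos (by omega), e3]
      exact adjH hs _ (by omega)
    · rw [chainM, if_neg (by omega), if_pos (by omega), chainM, if_neg (by omega),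
        if_neg (by omega), h2]
      exact adjV hs _ (by omega)
    · rw [chainM, if_neg (by omega), if_neg (by omega), chainM, if_neg (by omega),
        if_neg (by omega)]
      have e : b0 t j + (i + 1 - 2) = (b0 t j + (i-2)) + 1 := by omega
      rw [e]; exact adjH hs _ (by omega)

lemma chainI_adj (hs : 0 < s) (r0 : ℕ) (hr : r0 < Kk t s) (j : ZMod s) (i : ℕ) :
    (shallowVortexGrid (Kk t s)).Adj (chainI hs r0 j i) (chainI hs r0 j (i+1)) := by
  rw [chainI, chainI, ← Nat.add_assoc]
  exact adjH hs _ hr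

lemma chain_adj (hs : 0 < s) (v : Vt t s ⊕ Qt t s) (i : ℕ) (h : i + 1 < clen t s v) :
    (shallowVortexGrid (Kk t s)).Adj (chain hs v i) (chain hs v (i+1)) := by
  have hK := K_ge (t := t) hs
  match v with
  | .inr q => exact chainV_adj hs _ _
  | .inl a =>
    rw [chain]
    by_cases h1 : (a.1 : ℕ) = t-1
    · rw [if_pos h1]
      rw [clen, if_pos h1] at h
      exact chainU_adj hs _ _ h
    · rw [if_neg h1]
      by_cases h2 : (a.1 : ℕ) = t-2
      · rw [if_pos h2]
        exact chainM_adj hs _ _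
      · rw [if_neg h2]
        exact chainI_adj hs _ (by omega) _ _

-- the branch-assignment decoding function
def finT (ht : 0 < t) (a : ℕ) : Fin t := ⟨a % t, Nat.mod_lt _ ht⟩

def uV (ht : 0 < t) (s : ℕ) (j₀ : ℕ) : Vt t s := (finT ht (t-1), (j₀ : ZMod s))

lemma finT_val (ht : 0 < t) {a : ℕ} (h : a < t) : ((finT ht a : Fin t) : ℕ) = a :=
  Nat.mod_eq_of_lt h

def vQ (ht : 0 < t) (s : ℕ) (j₀ : ℕ) : ↥(Qt t s) :=
  ⟨uV ht s j₀, by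
    show ((finT ht (t-1) : Fin t) : ℕ) = t-1
    exact finT_val ht (by omega)⟩

def Fraw (ht : 0 < t) (s : ℕ) (r cv : ℕ) : Option (Vt t s ⊕ ↥(Qt t s)) :=
  let j₀ := cv / (2*(t+3))
  let o := cv % (2*(t+3))
  if r = 0 then
    (if o % 2 = 0 then some (.inl (uV ht s j₀)) else some (.inr (vQ ht s j₀)))
  else if r = 1 then
    (if o < 2 then some (.inl (uV ht s (j₀ + (s-1))))
     else if o < 4 then (if 2 ≤ t then some (.inl (finT ht (t-2), (j₀ : ZMod s))) else none)
     else if 2*t+4 ≤ o then some (.inl (uV ht s j₀)) else none)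
  else if r ≤ t then some (.inl (finT ht (t - r), (j₀ : ZMod s)))
  else none

def F (ht : 0 < t) (x : Wt t s) : Option (Vt t s ⊕ ↥(Qt t s)) :=
  Fraw ht s (x.1 : ℕ) (x.2.val)

lemma F_mk (ht : 0 < t) (hs : 0 < s) (r c : ℕ) :
    F ht (mk hs r c : Wt t s) = Fraw ht s (r % Kk t s) (c % Nn t s) := by
  unfold F mk
  rw [ZMod.val_natCast]

lemma div_b0 (j : ZMod s) {c2 : ℕ} (hc : c2 < 2*(t+3)) :
    (b0 t j + c2) / (2*(t+3)) = j.val := by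
  rw [b0, Nat.mul_add_div (by omega), Nat.div_eq_of_lt hc, Nat.add_zero]

lemma mod_b0 (j : ZMod s) {c2 : ℕ} (hc : c2 < 2*(t+3)) :
    (b0 t j + c2) % (2*(t+3)) = c2 := by
  rw [b0, Nat.mul_add_mod, Nat.mod_eq_of_lt hc]

lemma b0_lt (hs : 0 < s) (j : ZMod s) {c2 : ℕ} (hc : c2 < 2*(t+3)) :
    b0 t j + c2 < Nn t s := by
  haveI : NeZero s := ⟨by omega⟩
  have hj : j.val + 1 ≤ s := ZMod.val_lt j
  calc b0 t j + c2 < 2*(t+3)*j.val + 2*(t+3) := by rw [b0]; omega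
    _ = 2*(t+3)*(j.val + 1) := by ring
    _ ≤ 2*(t+3)*s := Nat.mul_le_mul_left _ hj
    _ = Nn t s := by show _ = 2*((t+3)*s); ring

lemma Fraw_std (ht : 0 < t) (hs : 0 < s) (j : ZMod s) (r : ℕ) {c2 : ℕ} (hc : c2 < 2*(t+3)) :
    (Fraw ht s r (b0 t j + c2) : Option (Vt t s ⊕ ↥(Qt t s))) =
    (if r = 0 then
      (if c2 % 2 = 0 then some (.inl (uV ht s j.val)) else some (.inr (vQ ht s j.val)))
    else if r = 1 then
      (if c2 < 2 then some (.inl (uV ht s (j.val + (s-1))))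
       else if c2 < 4 then (if 2 ≤ t then some (.inl (finT ht (t-2), (j.val : ZMod s))) else none)
       else if 2*t+4 ≤ c2 then some (.inl (uV ht s j.val)) else none)
    else if r ≤ t then some (.inl (finT ht (t - r), (j.val : ZMod s)))
    else none) := by
  unfold Fraw
  rw [div_b0 j hc, mod_b0 j hc]

lemma cast_val (hs : 0 < s) (j : ZMod s) : ((j.val : ℕ) : ZMod s) = j := by
  haveI : NeZero s := ⟨by omega⟩
  exact ZMod.natCast_rightInverse j

lemma F_mk_std (ht : 0 < t) (hs : 0 < s) (j : ZMod s) (r : ℕ) (hr : r ≤ t) {c2 : ℕ}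
    (hc : c2 < 2*(t+3)) :
    F ht (mk hs r (b0 t j + c2) : Wt t s) =
    (if r = 0 then
      (if c2 % 2 = 0 then some (.inl (uV ht s j.val)) else some (.inr (vQ ht s j.val)))
    else if r = 1 then
      (if c2 < 2 then some (.inl (uV ht s (j.val + (s-1))))
       else if c2 < 4 then (if 2 ≤ t then some (.inl (finT ht (t-2), (j.val : ZMod s))) else none)
       else if 2*t+4 ≤ c2 then some (.inl (uV ht s j.val)) else none)
    else if r ≤ t then some (.inl (finT ht (t - r), (j.val : ZMod s)))
    else none) := by
  have hK := K_ge (t := t) hs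
  rw [F_mk, Nat.mod_eq_of_lt (show r < Kk t s by omega),
    Nat.mod_eq_of_lt (b0_lt hs j hc), Fraw_std ht hs j r hc]

-- consistency of F with the chains
lemma uV_eq' (ht : 0 < t) (hs : 0 < s) (a1 : Fin t) (j : ZMod s) (h1 : (a1 : ℕ) = t-1)
    (m : ℕ) (hm : ((m : ℕ) : ZMod s) = j) : (uV ht s m : Vt t s) = (a1, j) := by
  unfold uV
  rw [show (finT ht (t-1) : Fin t) = a1 from Fin.ext (by rw [finT_val ht (by omega)]; omega), hm]

lemma val_succ_lt (hs : 0 < s) (j : ZMod s) (h : j.val + 1 < s) :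
    (j + 1 : ZMod s).val = j.val + 1 := by
  haveI : NeZero s := ⟨by omega⟩
  have hs2 : 1 < s := by omega
  haveI : Fact (1 < s) := ⟨hs2⟩
  rw [ZMod.val_add, ZMod.val_one, Nat.mod_eq_of_lt (by omega)]

lemma F_chainU (ht : 0 < t) (hs : 0 < s) (a1 : Fin t) (j : ZMod s) (h1 : (a1 : ℕ) = t-1)
    (i : ℕ) (hi : i < (t+3)+4) :
    F ht (chainU hs j i : Wt t s) = some (.inl (a1, j)) := by
  haveI : NeZero s := ⟨by omega⟩
  have huv := uV_eq' ht hs a1 j h1 j.val (cast_val hs j)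
  rcases Nat.lt_or_ge i (t+3) with h | h
  · rw [chainU, if_pos h, F_mk_std ht hs j 0 (by omega) (by omega), if_pos rfl,
      if_pos (by omega), huv]
  · rw [chainU, if_neg (by omega)]
    rcases Nat.lt_or_ge (i - (t+3)) 2 with h2 | h2
    · rw [show b0 t j + (2*t+4) + (i - (t+3)) = b0 t j + (2*t+4 + (i - (t+3))) by omega,
        F_mk_std ht hs j 1 (by omega) (by omega), if_neg (by omega), if_pos rfl,
        if_neg (by omega), if_neg (by omega), if_pos (by omega), huv]
    · -- wrapping case: columns in the next group
      have hd : i - (t+3) - 2 < 2 := by omega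
      rcases Nat.lt_or_ge (j.val + 1) s with hj | hj
      · have hv := val_succ_lt hs j hj
        rw [show b0 t j + (2*t+4) + (i - (t+3)) = b0 t (j+1) + (i - (t+3) - 2) by
            rw [b0, b0, hv]; ring_nf; omega,
          F_mk_std ht hs (j+1) 1 (by omega) (by omega), if_neg (by omega), if_pos rfl,
          if_pos (by omega)]
        rw [uV_eq' ht hs a1 j h1 ((j+1).val + (s-1)) ?_]
        rw [hv, show j.val + 1 + (s-1) = j.val + s by omega]
        push_cast [ZMod.natCast_self]
        rw [cast_val hs j, add_zero]
      · -- j is the last group: wrap around to group 0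
        have hj' : j.val + 1 = s := by
          have := ZMod.val_lt j
          omega
        have e0 : b0 t (0 : ZMod s) = 0 := by rw [b0, ZMod.val_zero, Nat.mul_zero]
        have key : 2*(t+3)*j.val + 2*(t+3) = Nn t s := by
          rw [show (2:ℕ)*(t+3)*j.val + 2*(t+3) = 2*((t+3)*(j.val+1)) by ring, hj']
        have hb : b0 t j = 2*(t+3)*j.val := rfl
        have hcol : (b0 t j + (2*t+4) + (i - (t+3))) % Nn t s
            = b0 t (0 : ZMod s) + (i - (t+3) - 2) := by
          rw [show b0 t j + (2*t+4) + (i - (t+3))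
              = Nn t s + (b0 t (0 : ZMod s) + (i - (t+3) - 2)) by omega,
            Nat.add_mod_left, Nat.mod_eq_of_lt (b0_lt hs (0 : ZMod s) (by omega))]
        rw [F_mk, Nat.mod_eq_of_lt (show 1 < Kk t s by have := K_ge (t := t) hs; omega),
          hcol, Fraw_std ht hs (0 : ZMod s) 1 (by omega),
          if_neg (by omega), if_pos rfl, if_pos (by omega)]
        rw [uV_eq' ht hs a1 j h1 ((0 : ZMod s).val + (s-1)) ?_]
        rw [ZMod.val_zero, Nat.zero_add, show s - 1 = j.val by omega, cast_val hs j]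

lemma F_chainV (ht : 0 < t) (hs : 0 < s) (q : ↥(Qt t s)) (i : ℕ) (hi : i < t+3) :
    F ht (chainV hs q.1.2 i : Wt t s) = some (.inr q) := by
  obtain ⟨⟨q1, q2⟩, hq⟩ := q
  have hq' : (q1 : ℕ) = t - 1 := hq
  rw [chainV, F_mk_std ht hs q2 0 (by omega) (by omega), if_pos rfl, if_neg (by omega)]
  rw [show (vQ ht s q2.val : ↥(Qt t s)) = ⟨(q1, q2), hq⟩ from Subtype.ext
    (uV_eq' ht hs q1 q2 hq' q2.val (cast_val hs q2))]

lemma F_chainM (ht : 0 < t) (hs : 0 < s) (a1 : Fin t) (j : ZMod s) (h2t : 2 ≤ t)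
    (h1 : (a1 : ℕ) = t-2) (i : ℕ) (hi : i < 2*(t+3)+2) :
    F ht (chainM hs j i : Wt t s) = some (.inl (a1, j)) := by
  have hm : ((finT ht (t-2) : Fin t), ((j.val : ℕ) : ZMod s)) = ((a1, j) : Vt t s) := by
    rw [show (finT ht (t-2) : Fin t) = a1 from Fin.ext (by rw [finT_val ht (by omega)]; omega),
      cast_val hs j]
  rcases Nat.lt_or_ge i 3 with h | h
  · rw [chainM, if_pos (by omega), F_mk_std ht hs j 2 (by omega) (by omega),
      if_neg (by omega), if_neg (by omega), if_pos (by omega), hm]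
  · rcases Nat.lt_or_ge i 5 with h2 | h2
    · rw [chainM, if_neg (by omega), if_pos (by omega),
        F_mk_std ht hs j 1 (by omega) (show i - 1 < 2*(t+3) by omega),
        if_neg (by omega), if_pos rfl, if_neg (by omega), if_pos (by omega), if_pos h2t, hm]
    · rw [chainM, if_neg (by omega), if_neg (by omega),
        F_mk_std ht hs j 2 (by omega) (show i - 2 < 2*(t+3) by omega),
        if_neg (by omega), if_neg (by omega), if_pos (by omega), hm]

lemma F_chainI (ht : 0 < t) (hs : 0 < s) (a1 : Fin t) (j : ZMod s)
    (h1 : (a1 : ℕ) ≤ t-3) (h3t : 3 ≤ t) (i : ℕ) (hi : i < 2*(t+3)) :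
    F ht (chainI hs (t - (a1 : ℕ)) j i : Wt t s) = some (.inl (a1, j)) := by
  have ha := a1.isLt
  rw [chainI, F_mk_std ht hs j (t - (a1:ℕ)) (by omega) (by omega),
    if_neg (by omega), if_neg (by omega), if_pos (by omega),
    show ((finT ht (t - (t - (a1:ℕ))) : Fin t), ((j.val : ℕ) : ZMod s)) = ((a1, j) : Vt t s) by
      rw [show (finT ht (t - (t - (a1:ℕ))) : Fin t) = a1 from
        Fin.ext (by rw [finT_val ht (by omega)]; omega), cast_val hs j]]

lemma F_chain (ht : 0 < t) (hs : 0 < s) (v : Vt t s ⊕ ↥(Qt t s)) (i : ℕ)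
    (hi : i < clen t s v) :
    F ht (chain hs v i : Wt t s) = some v := by
  match v with
  | .inr q => exact F_chainV ht hs q i hi
  | .inl a =>
    obtain ⟨a1, j⟩ := a
    rw [chain]
    by_cases h1 : (a1 : ℕ) = t-1
    · rw [if_pos h1]
      rw [clen, if_pos h1] at hi
      exact F_chainU ht hs a1 j h1 i hi
    · rw [if_neg h1]
      by_cases h2 : (a1 : ℕ) = t-2
      · rw [if_pos h2]
        exact F_chainM ht hs a1 j (by omega) h2 i
          (by rw [clen, if_neg h1, if_pos h2] at hi; exact hi)
      · rw [if_neg h2]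
        have ha := a1.isLt
        exact F_chainI ht hs a1 j (by omega) (by omega) i
          (by rw [clen, if_neg h1, if_neg h2] at hi; exact hi)

-- the branch sets
def Xb (hs : 0 < s) (v : Vt t s ⊕ ↥(Qt t s)) : Set (Wt t s) :=
  chain hs v '' Set.Iio (clen t s v)

lemma clen_pos (v : Vt t s ⊕ ↥(Qt t s)) : 0 < clen t s v := by
  match v with
  | .inr q => simp [clen]
  | .inl a =>
    rw [clen]
    split
    · omega
    · split <;> omega

lemma chain_connected {W : Type*} (G : SimpleGraph W) (f : ℕ → W) (m : ℕ) (hm : 0 < m)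
    (hadj : ∀ i, i + 1 < m → G.Adj (f i) (f (i+1))) :
    (G.induce (f '' Set.Iio m)).Connected := by
  have h0 : f 0 ∈ f '' Set.Iio m := ⟨0, hm, rfl⟩
  rw [SimpleGraph.connected_iff]
  have key : ∀ i (h : i < m), (G.induce (f '' Set.Iio m)).Reachable ⟨f 0, h0⟩ ⟨f i, ⟨i, h, rfl⟩⟩ := by
    intro i
    induction i with
    | zero => intro h; exact SimpleGraph.Reachable.refl _
    | succ n ih =>
      intro h
      have hn : n < m := lt_trans (Nat.lt_succ_self n) h
      refine (ih hn).trans (SimpleGraph.Adj.reachable ?_)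
      exact hadj n h
  refine ⟨?_, ⟨⟨f 0, h0⟩⟩⟩
  rintro ⟨x, hx⟩ ⟨y, hy⟩
  obtain ⟨i, hi, rfl⟩ := hx
  obtain ⟨j, hj, rfl⟩ := hy
  exact (key i hi).symm.trans (key j hj)

lemma Xb_connected (hs : 0 < s) (v : Vt t s ⊕ ↥(Qt t s)) :
    ((shallowVortexGrid (Kk t s)).induce (Xb hs v)).Connected :=
  chain_connected _ _ _ (clen_pos v) (chain_adj hs v)

lemma Xb_disjoint (ht : 0 < t) (hs : 0 < s) (u v : Vt t s ⊕ ↥(Qt t s)) (huv : u ≠ v) :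
    Disjoint (Xb hs u) (Xb hs v) := by
  rw [Set.disjoint_left]
  rintro x ⟨i, hi, rfl⟩ ⟨i', hi', he⟩
  have h1 := F_chain ht hs u i hi
  have h2 := F_chain ht hs v i' hi'
  rw [he, h1] at h2
  exact huv (Option.some_injective _ h2)

-- membership helpers
lemma memU (hs : 0 < s) {a1 : Fin t} (j : ZMod s) (h1 : (a1 : ℕ) = t-1) {i : ℕ}
    (hi : i < (t+3)+4) : chainU hs j i ∈ Xb hs (.inl (a1, j)) :=
  ⟨i, by rw [clen, if_pos h1]; exact hi, by rw [chain, if_pos h1]⟩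

lemma memM (hs : 0 < s) {a1 : Fin t} (j : ZMod s) (h2t : 2 ≤ t) (h1 : (a1 : ℕ) = t-2)
    {i : ℕ} (hi : i < 2*(t+3)+2) : chainM hs j i ∈ Xb hs (.inl (a1, j)) :=
  ⟨i, by rw [clen, if_neg (show ¬((a1:ℕ) = t-1) by omega), if_pos h1]; exact hi,
    by rw [chain, if_neg (show ¬((a1:ℕ) = t-1) by omega), if_pos h1]⟩

lemma memI (hs : 0 < s) {a1 : Fin t} (j : ZMod s) (h3t : 3 ≤ t) (h1 : (a1 : ℕ) ≤ t-3)
    {i : ℕ} (hi : i < 2*(t+3)) : chainI hs (t - (a1 : ℕ)) j i ∈ Xb hs (.inl (a1, j)) :=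
  ⟨i, by rw [clen, if_neg (show ¬((a1:ℕ) = t-1) by omega),
      if_neg (show ¬((a1:ℕ) = t-2) by omega)]; exact hi,
    by rw [chain, if_neg (show ¬((a1:ℕ) = t-1) by omega),
      if_neg (show ¬((a1:ℕ) = t-2) by omega)]⟩

lemma memV (hs : 0 < s) (q : ↥(Qt t s)) {i : ℕ} (hi : i < t+3) :
    chainV hs q.1.2 i ∈ Xb hs (.inr q) :=
  ⟨i, by rw [clen]; exact hi, by rw [chain]⟩

-- shifting the base column to the next group
lemma mk_shift (hs : 0 < s) (j : ZMod s) (r c2 : ℕ) :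
    (mk hs r (b0 t (j+1) + c2) : Wt t s) = mk hs r (b0 t j + (2*(t+3) + c2)) := by
  haveI : NeZero s := ⟨by omega⟩
  apply mk_congr
  show Nat.ModEq _ _ _
  have h1 : (j + 1 : ZMod s) = ((j.val + 1 : ℕ) : ZMod s) := by
    push_cast [cast_val hs j]
    ring
  have h2 : (j+1 : ZMod s).val = (j.val + 1) % s := by rw [h1, ZMod.val_natCast]
  have h3 : (2*(t+3)) * ((j.val + 1) % s) ≡ (2*(t+3)) * (j.val + 1) [MOD (2*(t+3)) * s] :=
    Nat.ModEq.mul_left' _ (Nat.mod_modEq _ s)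
  have h4 : (2*(t+3)) * s = Nn t s := by show _ = 2*((t+3)*s); ring
  rw [h4] at h3
  calc b0 t (j+1) + c2 = 2*(t+3) * ((j.val + 1) % s) + c2 := by rw [b0, h2]
    _ ≡ 2*(t+3) * (j.val + 1) + c2 [MOD Nn t s] := h3.add_right c2
    _ = b0 t j + (2*(t+3) + c2) := by rw [b0]; ring

-- edge realization
def Pp (hs : 0 < s) (u v : Vt t s ⊕ ↥(Qt t s)) : Prop :=
  ∃ a ∈ Xb hs u, ∃ b ∈ Xb hs v, (shallowVortexGrid (Kk t s)).Adj a b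

lemma Pp_symm {hs : 0 < s} {u v : Vt t s ⊕ ↥(Qt t s)} (h : Pp hs u v) : Pp hs v u := by
  obtain ⟨a, ha, b, hb, hab⟩ := h
  exact ⟨b, hb, a, ha, hab.symm⟩

lemma R_inner_h (hs : 0 < s) (a1 : Fin t) (j : ZMod s) (h3t : 3 ≤ t) (h1 : (a1:ℕ) ≤ t-3) :
    Pp hs (.inl (a1, j)) (.inl (a1, j+1)) := by
  have hK := K_ge (t := t) hs
  refine ⟨_, memI hs j h3t h1 (show 2*(t+3)-1 < 2*(t+3) by omega), _,
    memI hs (j+1) h3t h1 (show 0 < 2*(t+3) by omega), ?_⟩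
  rw [chainI, chainI, mk_shift hs j _ _,
    show b0 t j + (2*(t+3) + 0) = (b0 t j + (2*(t+3)-1)) + 1 by omega]
  exact adjH hs _ (by omega)

lemma R_M_h (hs : 0 < s) (a1 : Fin t) (j : ZMod s) (h2t : 2 ≤ t) (h1 : (a1:ℕ) = t-2) :
    Pp hs (.inl (a1, j)) (.inl (a1, j+1)) := by
  have hK := K_ge (t := t) hs
  refine ⟨_, memM hs j h2t h1 (show 2*(t+3)+1 < 2*(t+3)+2 by omega), _,
    memM hs (j+1) h2t h1 (show 0 < 2*(t+3)+2 by omega), ?_⟩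
  rw [chainM, if_neg (by omega), if_neg (by omega), chainM, if_pos (by omega),
    mk_shift hs j _ _,
    show b0 t j + (2*(t+3) + 0) = (b0 t j + (2*(t+3)+1-2)) + 1 by omega]
  exact adjH hs _ (by omega)

lemma R_U_h (hs : 0 < s) (a1 : Fin t) (j : ZMod s) (h1 : (a1:ℕ) = t-1) :
    Pp hs (.inl (a1, j)) (.inl (a1, j+1)) := by
  refine ⟨_, memU hs j h1 (show t+2 < (t+3)+4 by omega), _,
    memU hs (j+1) h1 (show 0 < (t+3)+4 by omega), ?_⟩
  rw [chainU, if_pos (by omega), chainU, if_pos (by omega), mk_shift hs j _ _,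
    show b0 t j + (2*(t+3) + 2*0) = (b0 t j + 2*(t+2)) + 2 by omega]
  exact adjC hs _

lemma R_V_V (hs : 0 < s) (q q' : ↥(Qt t s)) (h : q'.1.2 = q.1.2 + 1) :
    Pp hs (.inr q) (.inr q') := by
  refine ⟨_, memV hs q (show t+2 < t+3 by omega), _, memV hs q' (show 0 < t+3 by omega), ?_⟩
  rw [h, chainV, chainV, mk_shift hs q.1.2 _ _,
    show b0 t q.1.2 + (2*(t+3) + (2*0+1)) = (b0 t q.1.2 + (2*(t+2)+1)) + 2 by omega]
  exact adjC hs _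

lemma R_inner_v (hs : 0 < s) (a1 b1 : Fin t) (j : ZMod s) (h3t : 3 ≤ t)
    (hb : (b1:ℕ) = (a1:ℕ) + 1) (hbv : (b1:ℕ) ≤ t-2) :
    Pp hs (.inl (a1, j)) (.inl (b1, j)) := by
  have hK := K_ge (t := t) hs
  have ha1 : (a1:ℕ) ≤ t-3 := by omega
  rcases Nat.lt_or_ge (b1:ℕ) (t-2) with h2 | h2
  · refine ⟨_, memI hs j h3t ha1 (show 0 < 2*(t+3) by omega), _,
      memI hs j h3t (show (b1:ℕ) ≤ t-3 by omega) (show 0 < 2*(t+3) by omega), ?_⟩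
    rw [chainI, chainI, show t - (a1:ℕ) = (t - (b1:ℕ)) + 1 by omega]
    exact (adjV hs _ (by omega)).symm
  · have hb1 : (b1:ℕ) = t-2 := by omega
    refine ⟨_, memI hs j h3t ha1 (show 0 < 2*(t+3) by omega), _,
      memM hs j (by omega) hb1 (show 0 < 2*(t+3)+2 by omega), ?_⟩
    rw [chainI, chainM, if_pos (by omega), show t - (a1:ℕ) = 2 + 1 by omega]
    exact (adjV hs _ (by omega)).symm

lemma R_M_U_v (hs : 0 < s) (a1 b1 : Fin t) (j : ZMod s) (h2t : 2 ≤ t)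
    (ha : (a1:ℕ) = t-2) (hb1 : (b1:ℕ) = t-1) :
    Pp hs (.inl (a1, j)) (.inl (b1, j)) := by
  have hK := K_ge (t := t) hs
  refine ⟨_, memM hs j h2t ha (show 3 < 2*(t+3)+2 by omega), _,
    memU hs j hb1 (show 1 < (t+3)+4 by omega), ?_⟩
  rw [chainM, if_neg (by omega), if_pos (by omega), chainU, if_pos (by omega),
    show b0 t j + 2*1 = b0 t j + (3-1) by omega]
  exact (adjV hs _ (by omega)).symm

lemma R_U_V_same (hs : 0 < s) (q : ↥(Qt t s)) : Pp hs (.inl q.1) (.inr q) := by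
  have hK := K_ge (t := t) hs
  obtain ⟨⟨q1, q2⟩, hq⟩ := q
  have hq' : (q1 : ℕ) = t - 1 := hq
  refine ⟨_, memU hs q2 hq' (show 0 < (t+3)+4 by omega), _,
    memV hs ⟨(q1, q2), hq⟩ (show 0 < t+3 by omega), ?_⟩
  rw [chainU, if_pos (show (0:ℕ) < t+3 by omega), chainV,
    show b0 t q2 + (2*0+1) = (b0 t q2 + 2*0) + 1 by omega]
  exact adjH hs _ (by omega)

lemma R_U_V_succ (hs : 0 < s) (a1 : Fin t) (j : ZMod s) (q : ↥(Qt t s))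
    (h1 : (a1:ℕ) = t-1) (hq : q.1.2 = j + 1) :
    Pp hs (.inl (a1, j)) (.inr q) := by
  have hK := K_ge (t := t) hs
  refine ⟨_, memU hs j h1 (show t+6 < (t+3)+4 by omega), _,
    memV hs q (show 0 < t+3 by omega), ?_⟩
  rw [hq, chainU, if_neg (by omega), chainV, mk_shift hs j _ _,
    show b0 t j + (2*t+4) + (t+6-(t+3)) = b0 t j + (2*t+7) by omega,
    show b0 t j + (2*(t+3) + (2*0+1)) = b0 t j + (2*t+7) by omega]
  exact (adjV hs _ (by omega)).symm

lemma R_U_V_pred (hs : 0 < s) (a1 : Fin t) (a2 : ZMod s) (q : ↥(Qt t s))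
    (h1 : (a1:ℕ) = t-1) (hq : a2 = q.1.2 + 1) :
    Pp hs (.inl (a1, a2)) (.inr q) := by
  have hK := K_ge (t := t) hs
  subst hq
  refine ⟨_, memU hs (a1 := a1) (q.1.2 + 1) h1 (i := 0) (show 0 < (t+3)+4 by omega), _,
    memV hs q (show t+2 < t+3 by omega), ?_⟩
  rw [chainU, if_pos (show (0:ℕ) < t+3 by omega), chainV, mk_shift hs q.1.2 _ _]
  refine ((?_ : (shallowVortexGrid (Kk t s)).Adj _ _)).symm
  rw [show b0 t q.1.2 + (2*(t+3) + 2*0) = (b0 t q.1.2 + (2*(t+2)+1)) + 1 by omega]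
  exact adjH hs _ (by omega)

lemma R_M_V (hs : 0 < s) (a1 : Fin t) (j : ZMod s) (q : ↥(Qt t s)) (h2t : 2 ≤ t)
    (ha : (a1:ℕ) = t-2) (hq : q.1.2 = j) :
    Pp hs (.inl (a1, j)) (.inr q) := by
  have hK := K_ge (t := t) hs
  refine ⟨_, memM hs j h2t ha (show 4 < 2*(t+3)+2 by omega), _,
    memV hs q (show 1 < t+3 by omega), ?_⟩
  rw [hq, chainM, if_neg (by omega), if_pos (by omega), chainV,
    show b0 t j + (2*1+1) = b0 t j + (4-1) by omega]
  exact (adjV hs _ (by omega)).symm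

-- decoding grid adjacency
lemma gridRel_P (hs : 0 < s) (a b : Vt t s)
    (h : (a.1 = b.1 ∧ b.2 = a.2 + 1) ∨ (a.2 = b.2 ∧ (b.1 : ℕ) = (a.1 : ℕ) + 1)) :
    Pp hs (.inl a) (.inl b) := by
  obtain ⟨a1, a2⟩ := a
  obtain ⟨b1, b2⟩ := b
  rcases h with ⟨h1, h2⟩ | ⟨h1, h2⟩
  · dsimp only at h1 h2
    subst h1
    subst h2
    by_cases hc1 : (a1 : ℕ) = t-1
    · exact R_U_h hs a1 a2 hc1
    · have ha := a1.isLt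
      by_cases hc2 : (a1 : ℕ) = t-2
      · exact R_M_h hs a1 a2 (by omega) hc2
      · exact R_inner_h hs a1 a2 (by omega) (by omega)
  · dsimp only at h1 h2
    subst h1
    have hb := b1.isLt
    by_cases hb1 : (b1 : ℕ) = t-1
    · exact R_M_U_v hs a1 b1 a2 (by omega) (by omega) hb1
    · exact R_inner_v hs a1 b1 a2 (by omega) h2 (by omega)

lemma gridAdj_P (hs : 0 < s) (a b : Vt t s) (h : (cylGrid t s).Adj a b) :
    Pp hs (.inl a) (.inl b) := by
  rw [cylGrid, SimpleGraph.fromRel_adj] at h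
  rcases h.2 with h' | h'
  · exact gridRel_P hs a b h'
  · exact Pp_symm (gridRel_P hs b a h')

lemma LR_P (hs : 0 < s) (a : Vt t s) (q : ↥(Qt t s))
    (h : a = (q : Vt t s) ∨ (cylGrid t s).Adj a q.1) : Pp hs (.inl a) (.inr q) := by
  rcases h with rfl | h
  · exact R_U_V_same hs q
  · have hQ : ((q.1.1 : Fin t) : ℕ) = t - 1 := q.2
    rw [cylGrid, SimpleGraph.fromRel_adj] at h
    obtain ⟨a1, a2⟩ := a
    have ha := a1.isLt
    rcases h.2 with (⟨h1, h2⟩ | ⟨h1, h2⟩) | (⟨h1, h2⟩ | ⟨h1, h2⟩)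
    · dsimp only at h1 h2
      refine R_U_V_succ hs a1 a2 q ?_ h2
      rw [h1]; exact hQ
    · dsimp only at h1 h2
      exact R_M_V hs a1 a2 q (by omega) (by omega) h1.symm
    · dsimp only at h1 h2
      refine R_U_V_pred hs a1 a2 q ?_ h2
      rw [← h1]; exact hQ
    · dsimp only at h1 h2
      omega

lemma VV_P (hs : 0 < s) (q q' : ↥(Qt t s)) (h : (cylGrid t s).Adj q.1 q'.1) :
    Pp hs (.inr q) (.inr q') := by
  have hQ : ((q.1.1 : Fin t) : ℕ) = t - 1 := q.2
  have hQ' : ((q'.1.1 : Fin t) : ℕ) = t - 1 := q'.2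
  rw [cylGrid, SimpleGraph.fromRel_adj] at h
  rcases h.2 with (⟨h1, h2⟩ | ⟨h1, h2⟩) | (⟨h1, h2⟩ | ⟨h1, h2⟩)
  · exact R_V_V hs q q' h2
  · omega
  · exact Pp_symm (R_V_V hs q' q h2)
  · omega

lemma realize (ht : 0 < t) (hs : 0 < s) (u v : Vt t s ⊕ ↥(Qt t s))
    (h : (cylGridRingBlowup t s).Adj u v) :
    ∃ a ∈ Xb hs u, ∃ b ∈ Xb hs v, (shallowVortexGrid (Kk t s)).Adj a b := by
  rw [cylGridRingBlowup, ringBlowup, SimpleGraph.fromRel_adj] at h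
  obtain ⟨hne, h2⟩ := h
  match u, v with
  | .inl a, .inl b =>
    rcases h2 with h | h
    · exact gridAdj_P hs a b h
    · exact gridAdj_P hs a b h.symm
  | .inl a, .inr q =>
    rcases h2 with h | h
    · exact LR_P hs a q h
    · exact h.elim
  | .inr q, .inl a =>
    rcases h2 with h | h
    · exact h.elim
    · exact Pp_symm (LR_P hs a q h)
  | .inr q, .inr q' =>
    rcases h2 with h | h
    · exact VV_P hs q q' h
    · exact Pp_symm (VV_P hs q' q h)

end CGB

/-- There is a function `g` such that for all `t ≥ 1` and `s ≥ 3`, the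
`(t × s)`-cylindrical grid ring blowup is a minor of the shallow vortex grid `H_{g(t,s)}`. -/
theorem cylGridRingBlowup_isMinor_shallowVortexGrid :
    ∃ g : ℕ × ℕ → ℕ, ∀ t s : ℕ, 1 ≤ t → 3 ≤ s →
      IsMinorOf (cylGridRingBlowup t s) (shallowVortexGrid (g (t, s))) := by
  refine ⟨fun p => (p.1 + 3) * p.2, ?_⟩
  intro t s ht hs
  have hs0 : 0 < s := by omega
  have ht0 : 0 < t := ht
  exact ⟨CGB.Xb hs0, fun v => CGB.Xb_connected hs0 v,
    fun u v h => CGB.Xb_disjoint ht0 hs0 u v h,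
    fun u v h => CGB.realize ht0 hs0 u v h⟩
end

section
/- For all integers s, r ≥ 1 there exists an integer m ≥ 1 such that the graph Q_{s,r} is a minor of the shallow vortex grid H_m. -/
/-- The graph `Q_{s,r}`: the `(s × (s·r))`-grid together with `2r` terminal vertices
`t_i, t_i'` (encoded as `(i, 0)` and `(i, 1)`), where for each `i` both `t_i` and `t_i'`
are joined to the `i`-th block of `s` consecutive vertices of the first row. -/
def Qgraph (s r : ℕ) : SimpleGraph ((Fin s × Fin (s * r)) ⊕ (Fin r × Fin 2)) :=
  SimpleGraph.fromRel fun x y =>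
    match x, y with
    | Sum.inl a, Sum.inl b =>
        (a.1 = b.1 ∧ (b.2 : ℕ) = (a.2 : ℕ) + 1) ∨ (a.2 = b.2 ∧ (b.1 : ℕ) = (a.1 : ℕ) + 1)
    | Sum.inr u, Sum.inl a =>
        (a.1 : ℕ) = 0 ∧ (u.1 : ℕ) * s ≤ (a.2 : ℕ) ∧ (a.2 : ℕ) < (u.1 : ℕ) * s + s
    | _, _ => False

/-!
Take `m = s·r + s` and group the columns of `H_m` in pairs `{2t, 2t + 1}`. The grid vertex
`(i, j)` of `Q_{s,r}` becomes the edge of cycle `i + 1` in column pair `j`, so grid edges are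
realised by cycle edges and radial edges. The terminals of block `u` become the even,
respectively odd, vertices of the first cycle in the column pairs `us, …, us + s - 1`; the chords
`c ↦ c + 2` make each of these a path, and the radial edges to cycle `1` realise the terminal
edges. All branch sets are fibres of one labelling of `V(H_m)`, hence pairwise disjoint.
-/

open SimpleGraph Function

section Minor

variable {V W L : Type*}

theorem SimpleGraph.induce_connected_of_descent {G : SimpleGraph W} {S : Set W} (f : W → ℕ)
    {w₀ : W} (h₀ : w₀ ∈ S) (hstep : ∀ w ∈ S, w ≠ w₀ → ∃ w' ∈ S, G.Adj w w' ∧ f w' < f w) :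
    (G.induce S).Connected := by
  have reach (w : W) (hw : w ∈ S) : (G.induce S).Reachable ⟨w, hw⟩ ⟨w₀, h₀⟩ := by
    induction hf : f w using Nat.strong_induction_on generalizing w with
    | _ n ih =>
      by_cases h : w = w₀
      · subst h; rfl
      obtain ⟨w', hw', hadj, hlt⟩ := hstep w hw h
      have hadj' : (G.induce S).Adj ⟨w, hw⟩ ⟨w', hw'⟩ := by simpa using hadj
      exact hadj'.reachable.trans (ih _ (hf ▸ hlt) w' hw' rfl)
  have : Nonempty S := ⟨⟨w₀, h₀⟩⟩
  exact ⟨fun a b => (reach a a.2).trans (reach b b.2).symm⟩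

theorem isMinorOf_of_fibres {H : SimpleGraph V} {G : SimpleGraph W} (κ : W → L) (ι : V → L)
    (hι : Injective ι) (hconn : ∀ v, (G.induce (κ ⁻¹' {ι v})).Connected)
    (hadj : ∀ u v, H.Adj u v → ∃ a b, κ a = ι u ∧ κ b = ι v ∧ G.Adj a b) :
    IsMinorOf H G := by
  refine ⟨fun v => κ ⁻¹' {ι v}, hconn, fun u v huv => ?_, fun u v huv => ?_⟩
  · exact Disjoint.preimage κ (Set.disjoint_singleton.2 (hι.ne huv))
  · obtain ⟨a, b, ha, hb, hab⟩ := hadj u v huv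
    exact ⟨a, ha, b, hb, hab⟩

theorem forall_fromRel_adj_of_forall_rel {R : V → V → Prop} {G : SimpleGraph W} {κ : W → L}
    {ι : V → L} (h : ∀ u v, R u v → ∃ a b, κ a = ι u ∧ κ b = ι v ∧ G.Adj a b) :
    ∀ u v, (fromRel R).Adj u v → ∃ a b, κ a = ι u ∧ κ b = ι v ∧ G.Adj a b := by
  rintro u v ⟨-, huv | hvu⟩
  · exact h u v huv
  · obtain ⟨a, b, ha, hb, hab⟩ := h v u hvu
    exact ⟨b, a, hb, ha, hab.symm⟩

end Minor

section ShallowVortexGrid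

variable {m : ℕ}

theorem shallowVortexGrid_adj_add_one (x : Fin m) (c : ZMod (2 * m)) :
    (shallowVortexGrid m).Adj (x, c) (x, c + 1) := by
  refine (fromRel_adj _ _ _).2 ⟨fun h => ?_, Or.inl (Or.inl ⟨rfl, rfl⟩)⟩
  have h1 : ((1 : ℕ) : ZMod (2 * m)) = 0 := by simpa using (Prod.ext_iff.1 h).2
  have := Nat.dvd_one.1 ((ZMod.natCast_eq_zero_iff 1 (2 * m)).1 h1)
  omega

theorem shallowVortexGrid_adj_of_val_eq_succ {x y : Fin m} (hxy : (y : ℕ) = x + 1)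
    (c : ZMod (2 * m)) : (shallowVortexGrid m).Adj (x, c) (y, c) := by
  refine (fromRel_adj _ _ _).2 ⟨fun h => ?_, Or.inl (Or.inr (Or.inl ⟨rfl, hxy⟩))⟩
  have := congrArg (fun p : Fin m × ZMod (2 * m) => (p.1 : ℕ)) h
  simp only at this
  omega

theorem shallowVortexGrid_adj_add_two (hm : 1 < m) {x : Fin m} (hx : (x : ℕ) = 0)
    (c : ZMod (2 * m)) : (shallowVortexGrid m).Adj (x, c) (x, c + 2) := by
  refine (fromRel_adj _ _ _).2 ⟨fun h => ?_, Or.inl (Or.inr (Or.inr ⟨hx, hx, rfl⟩))⟩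
  have h2 : ((2 : ℕ) : ZMod (2 * m)) = 0 := by simpa using (Prod.ext_iff.1 h).2
  have := Nat.le_of_dvd two_pos ((ZMod.natCast_eq_zero_iff 2 (2 * m)).1 h2)
  omega

end ShallowVortexGrid

section Model

variable {s m : ℕ}

/-- Vertices of `H_m` are labelled by their cycle and column pair `{2t, 2t + 1}`: on cycle `i + 1`
by `inl (i, t)`, on the first cycle by `inr (t / s, parity)`. `QgraphLabel` labels `Q_{s,r}`
compatibly, and the branch set of a vertex is the fibre over its label. -/
def vortexLabel (s m : ℕ) (w : Fin m × ZMod (2 * m)) : (ℕ × ℕ) ⊕ (ℕ × ℕ) :=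
  if (w.1 : ℕ) = 0 then .inr (w.2.val / 2 / s, w.2.val % 2) else .inl (w.1 - 1, w.2.val / 2)

def QgraphLabel {s r : ℕ} : (Fin s × Fin (s * r)) ⊕ (Fin r × Fin 2) → (ℕ × ℕ) ⊕ (ℕ × ℕ) :=
  Sum.map (Prod.map Fin.val Fin.val) (Prod.map Fin.val Fin.val)

theorem QgraphLabel_injective {s r : ℕ} : Injective (QgraphLabel (s := s) (r := r)) :=
  Sum.map_injective.2 ⟨Fin.val_injective.prodMap Fin.val_injective,
    Fin.val_injective.prodMap Fin.val_injective⟩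

theorem vortexLabel_eq_inl {x : Fin m} {c : ZMod (2 * m)} {i j : ℕ} :
    vortexLabel s m (x, c) = .inl (i, j) ↔ (x : ℕ) = i + 1 ∧ c.val / 2 = j := by
  unfold vortexLabel
  dsimp only
  split_ifs with h
  · simp [h]
  · simp only [Sum.inl.injEq, Prod.ext_iff]
    omega

theorem vortexLabel_eq_inr {x : Fin m} {c : ZMod (2 * m)} {u e : ℕ} :
    vortexLabel s m (x, c) = .inr (u, e) ↔ (x : ℕ) = 0 ∧ c.val / 2 / s = u ∧ c.val % 2 = e := by
  unfold vortexLabel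
  dsimp only
  split_ifs with h <;> simp [h]

theorem induce_vortexLabel_inl_connected {i j : ℕ} (hi : i + 1 < m) (hj : j < m) :
    ((shallowVortexGrid m).induce (vortexLabel s m ⁻¹' {.inl (i, j)})).Connected := by
  have h₀ : (⟨i + 1, hi⟩, ((2 * j : ℕ) : ZMod (2 * m))) ∈ vortexLabel s m ⁻¹' {.inl (i, j)} := by
    rw [Set.mem_preimage, Set.mem_singleton_iff, vortexLabel_eq_inl,
      ZMod.val_cast_of_lt (by omega)]
    exact ⟨rfl, by omega⟩
  refine induce_connected_of_descent (fun w => w.2.val) h₀ ?_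
  rintro ⟨x, c⟩ hw hne
  obtain ⟨hx, hcj⟩ := vortexLabel_eq_inl.1 hw
  have : NeZero (2 * m) := ⟨by omega⟩
  have hc : c.val = 2 * j + 1 := by
    have : c.val ≠ 2 * j := fun h =>
      hne (Prod.ext (Fin.ext hx) (by rw [← ZMod.natCast_zmod_val c, h]))
    omega
  obtain rfl : x = ⟨i + 1, hi⟩ := Fin.ext hx
  obtain rfl : c = ((2 * j : ℕ) : ZMod (2 * m)) + 1 := by
    rw [← ZMod.natCast_zmod_val c, hc]; push_cast; ring
  refine ⟨_, h₀, (shallowVortexGrid_adj_add_one _ _).symm, ?_⟩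
  simp only [hc, ZMod.val_cast_of_lt (by omega : 2 * j < 2 * m)]
  omega

theorem induce_vortexLabel_inr_connected {u e : ℕ} (hs : 0 < s) (hm : 1 < m)
    (hu : u * s + s ≤ m) (he : e < 2) :
    ((shallowVortexGrid m).induce (vortexLabel s m ⁻¹' {.inr (u, e)})).Connected := by
  have hdiv {q : ℕ} : q / s = u ↔ u * s ≤ q ∧ q ≤ u * s + s - 1 := Nat.div_eq_iff hs
  have h₀ : (⟨0, by omega⟩, ((2 * (u * s) + e : ℕ) : ZMod (2 * m))) ∈
      vortexLabel s m ⁻¹' {.inr (u, e)} := by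
    rw [Set.mem_preimage, Set.mem_singleton_iff, vortexLabel_eq_inr,
      ZMod.val_cast_of_lt (by omega)]
    exact ⟨rfl, hdiv.2 (by omega), by omega⟩
  refine induce_connected_of_descent (fun w => w.2.val) h₀ ?_
  rintro ⟨x, c⟩ hw hne
  obtain ⟨hx, hcu, hce⟩ := vortexLabel_eq_inr.1 hw
  have : NeZero (2 * m) := ⟨by omega⟩
  have hcs := hdiv.1 hcu
  have hc : 2 * (u * s) + e + 2 ≤ c.val := by
    have : c.val ≠ 2 * (u * s) + e := fun h =>
      hne (Prod.ext (Fin.ext hx) (by rw [← ZMod.natCast_zmod_val c, h]))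
    omega
  have hc' : c.val - 2 < 2 * m := by have := c.val_lt; omega
  refine ⟨(x, ((c.val - 2 : ℕ) : ZMod (2 * m))), ?_, ?_, ?_⟩
  · rw [Set.mem_preimage, Set.mem_singleton_iff, vortexLabel_eq_inr, ZMod.val_cast_of_lt hc']
    exact ⟨hx, hdiv.2 (by omega), by omega⟩
  · have hc2 : c = ((c.val - 2 : ℕ) : ZMod (2 * m)) + 2 := by
      rw [Nat.cast_sub (by omega), ZMod.natCast_zmod_val]; ring
    conv_lhs => rw [hc2]
    exact (shallowVortexGrid_adj_add_two hm hx _).symm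
  · simp only [ZMod.val_cast_of_lt hc']
    omega

theorem exists_adj_vortexLabel_inl_inl_succ_snd {i j : ℕ} (hi : i + 1 < m) (hj : j + 1 < m) :
    ∃ a b, vortexLabel s m a = .inl (i, j) ∧ vortexLabel s m b = .inl (i, j + 1) ∧
      (shallowVortexGrid m).Adj a b := by
  refine ⟨(⟨i + 1, hi⟩, ((2 * j + 1 : ℕ) : ZMod (2 * m))),
    (⟨i + 1, hi⟩, ((2 * j + 2 : ℕ) : ZMod (2 * m))), ?_, ?_, ?_⟩
  · rw [vortexLabel_eq_inl, ZMod.val_cast_of_lt (by omega)]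
    exact ⟨rfl, by omega⟩
  · rw [vortexLabel_eq_inl, ZMod.val_cast_of_lt (by omega)]
    exact ⟨rfl, by omega⟩
  · convert shallowVortexGrid_adj_add_one _ _ using 3
    push_cast; ring

theorem exists_adj_vortexLabel_inl_inl_succ_fst {i j : ℕ} (hi : i + 2 < m) (hj : j < m) :
    ∃ a b, vortexLabel s m a = .inl (i, j) ∧ vortexLabel s m b = .inl (i + 1, j) ∧
      (shallowVortexGrid m).Adj a b := by
  refine ⟨(⟨i + 1, by omega⟩, ((2 * j : ℕ) : ZMod (2 * m))),
    (⟨i + 2, hi⟩, ((2 * j : ℕ) : ZMod (2 * m))), ?_, ?_,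
    shallowVortexGrid_adj_of_val_eq_succ rfl _⟩
  · rw [vortexLabel_eq_inl, ZMod.val_cast_of_lt (by omega)]
    exact ⟨rfl, by omega⟩
  · rw [vortexLabel_eq_inl, ZMod.val_cast_of_lt (by omega)]
    exact ⟨rfl, by omega⟩

theorem exists_adj_vortexLabel_inr_inl {j e : ℕ} (hm : 1 < m) (hj : j < m) (he : e < 2) :
    ∃ a b, vortexLabel s m a = .inr (j / s, e) ∧ vortexLabel s m b = .inl (0, j) ∧
      (shallowVortexGrid m).Adj a b := by
  have hc : (2 * j + e) / 2 = j := by omega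
  refine ⟨(⟨0, by omega⟩, ((2 * j + e : ℕ) : ZMod (2 * m))),
    (⟨1, hm⟩, ((2 * j + e : ℕ) : ZMod (2 * m))), ?_, ?_,
    shallowVortexGrid_adj_of_val_eq_succ rfl _⟩
  · rw [vortexLabel_eq_inr, ZMod.val_cast_of_lt (by omega), hc]
    exact ⟨rfl, rfl, by omega⟩
  · rw [vortexLabel_eq_inl, ZMod.val_cast_of_lt (by omega), hc]
    exact ⟨rfl, rfl⟩

theorem Qgraph_adj_exists_adj_vortexLabel {r : ℕ} (hsm : s < m) (hrm : s * r ≤ m) :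
    ∀ u v, (Qgraph s r).Adj u v → ∃ a b, vortexLabel s m a = QgraphLabel u ∧
      vortexLabel s m b = QgraphLabel v ∧ (shallowVortexGrid m).Adj a b := by
  apply forall_fromRel_adj_of_forall_rel
  -- `dsimp` reduces the relation to `False` in the two cases with a terminal on the right
  rintro (⟨i, j⟩ | ⟨u, e⟩) (⟨i', j'⟩ | ⟨u', e'⟩) h <;> dsimp only at h
  · have := i.isLt; have := i'.isLt; have := j.isLt; have := j'.isLt
    rcases h with ⟨rfl, hj⟩ | ⟨rfl, hi⟩
    · simpa only [QgraphLabel, Sum.map_inl, Prod.map_apply, hj] using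
        exists_adj_vortexLabel_inl_inl_succ_snd (s := s) (i := i) (j := j) (by omega) (by omega)
    · simpa only [QgraphLabel, Sum.map_inl, Prod.map_apply, hi] using
        exists_adj_vortexLabel_inl_inl_succ_fst (s := s) (i := i) (j := j) (by omega) (by omega)
  · obtain ⟨hi', hlo, hhi⟩ := h
    have := j'.isLt
    have hu : j' / s = u := (Nat.div_eq_iff (by omega)).2 ⟨hlo, by omega⟩
    simpa only [QgraphLabel, Sum.map_inl, Sum.map_inr, Prod.map_apply, hi', hu] using
      exists_adj_vortexLabel_inr_inl (s := s) (j := j') (by omega) (by omega) e.isLt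

end Model

/-- For all `s, r ≥ 1` there exists `m ≥ 1` such that `Q_{s,r}` is a minor of the
shallow vortex grid `H_m`. -/
theorem Qgraph_isMinor_shallowVortexGrid (s r : ℕ) (hs : 1 ≤ s) (hr : 1 ≤ r) :
    ∃ m : ℕ, 1 ≤ m ∧ IsMinorOf (Qgraph s r) (shallowVortexGrid m) := by
  have hsr : s ≤ s * r := Nat.le_mul_of_pos_right s hr
  refine ⟨s * r + s, by omega, isMinorOf_of_fibres (vortexLabel s _) QgraphLabel
    QgraphLabel_injective ?_ (Qgraph_adj_exists_adj_vortexLabel (by omega) (by omega))⟩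
  rintro (⟨i, j⟩ | ⟨u, e⟩)
  · exact induce_vortexLabel_inl_connected (by omega) (by omega)
  · have hu : (u : ℕ) * s ≤ s * r := mul_comm r s ▸ Nat.mul_le_mul_right s u.isLt.le
    exact induce_vortexLabel_inr_connected (u := u) (e := e) hs (by omega) (by omega) e.isLt
end

section
/- For all integers s, r ≥ 1 and any two distinct terminals x and x' of the graph Q_{s,r}, there exist s paths in Q_{s,r} from x to x' that are internally vertex-disjoint, i.e., pairwise share no vertices other than x and x'. -/
namespace SimpleGraph

variable {V : Type*} {G : SimpleGraph V}

namespace Walk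

def ofFun (f : ℕ → V) : (n : ℕ) → (∀ i < n, G.Adj (f i) (f (i + 1))) → G.Walk (f 0) (f n)
  | 0, _ => nil
  | n + 1, h => (ofFun f n fun i hi => h i (by omega)).concat (h n n.lt_add_one)

theorem support_ofFun (f : ℕ → V) (n : ℕ) (h : ∀ i < n, G.Adj (f i) (f (i + 1))) :
    (ofFun f n h).support = (List.range (n + 1)).map f := by
  induction n with
  | zero => rfl
  | succ n ih => simp [ofFun, ih, List.range_succ (n := n + 1)]

theorem mem_support_ofFun_iff {f : ℕ → V} {n : ℕ} {h : ∀ i < n, G.Adj (f i) (f (i + 1))}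
    {w : V} : w ∈ (ofFun f n h).support ↔ ∃ i ≤ n, f i = w := by
  simp [support_ofFun]

theorem isPath_ofFun {f : ℕ → V} {n : ℕ} {h : ∀ i < n, G.Adj (f i) (f (i + 1))}
    (hf : Set.InjOn f (Set.Iic n)) : (ofFun f n h).IsPath := by
  rw [isPath_def, support_ofFun]
  exact List.nodup_range.map_on fun i hi j hj hij =>
    hf (Nat.lt_succ_iff.mp (List.mem_range.mp hi)) (Nat.lt_succ_iff.mp (List.mem_range.mp hj)) hij

end Walk

def HasInternallyDisjointPaths (G : SimpleGraph V) (ι : Type*) (u v : V) : Prop :=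
  ∃ P : ι → G.Walk u v, (∀ i, (P i).IsPath) ∧
    ∀ i j, i ≠ j → ∀ w, w ∈ (P i).support → w ∈ (P j).support → w = u ∨ w = v

theorem HasInternallyDisjointPaths.symm {ι : Type*} {u v : V}
    (h : G.HasInternallyDisjointPaths ι u v) : G.HasInternallyDisjointPaths ι v u := by
  obtain ⟨P, hP, hdisj⟩ := h
  refine ⟨fun i => (P i).reverse, fun i => (hP i).reverse, fun i j hij w hi hj => ?_⟩
  rw [Walk.support_reverse, List.mem_reverse] at hi hj
  exact (hdisj i j hij w hi hj).symm

theorem hasInternallyDisjointPaths_of_fun {ι : Type*} {u v : V} (f : ι → ℕ → V) (n : ι → ℕ)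
    (hu : ∀ k, f k 0 = u) (hv : ∀ k, f k (n k) = v)
    (hadj : ∀ k, ∀ i < n k, G.Adj (f k i) (f k (i + 1)))
    (hinj : ∀ k, Set.InjOn (f k) (Set.Iic (n k)))
    (hdisj : ∀ k l i j, 0 < i → i < n k → 0 < j → j < n l → f k i = f l j → k = l) :
    G.HasInternallyDisjointPaths ι u v := by
  refine ⟨fun k => (Walk.ofFun (f k) (n k) (hadj k)).copy (hu k) (hv k),
    fun k => (Walk.isPath_copy _ _ _).2 (Walk.isPath_ofFun (hinj k)),
    fun k l hkl w hk hl => ?_⟩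
  simp only [Walk.support_copy, Walk.mem_support_ofFun_iff] at hk hl
  obtain ⟨i, hi, rfl⟩ := hk
  obtain ⟨j, hj, hij⟩ := hl
  rcases Nat.eq_zero_or_pos i with rfl | hi₀
  · exact Or.inl (hu k)
  rcases hi.eq_or_lt with rfl | hin
  · exact Or.inr (hv k)
  rcases Nat.eq_zero_or_pos j with rfl | hj₀
  · exact Or.inl (hij ▸ hu l)
  rcases hj.eq_or_lt with rfl | hjn
  · exact Or.inr (hij ▸ hv l)
  exact absurd (hdisj k l i j hi₀ hin hj₀ hjn hij.symm) hkl

end SimpleGraph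

namespace Qgraph

theorem block_end_le {s r : ℕ} (u : Fin r) : (u : ℕ) * s + s ≤ s * r := by
  nlinarith [u.isLt]

variable {s r : ℕ} [NeZero s] [NeZero r]

/-- Grid vertex in row `m`, column `c`; the coordinates are reduced modulo `s` and `s * r` so
that it is defined for all naturals, and every lemma below assumes they are in range. -/
def cell (s r : ℕ) [NeZero s] [NeZero r] (m c : ℕ) : (Fin s × Fin (s * r)) ⊕ (Fin r × Fin 2) :=
  Sum.inl (Fin.ofNat s m, Fin.ofNat (s * r) c)

theorem cell_ne_inr (m c : ℕ) (u : Fin r × Fin 2) : cell s r m c ≠ Sum.inr u :=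
  Sum.inl_ne_inr

theorem cell_inj {m m' c c' : ℕ} (hm : m < s) (hm' : m' < s) (hc : c < s * r) (hc' : c' < s * r) :
    cell s r m c = cell s r m' c' ↔ m = m' ∧ c = c' := by
  simp [cell, Prod.ext_iff, Fin.ext_iff, Nat.mod_eq_of_lt, hm, hm', hc, hc']

theorem adj_cell {m m' c c' : ℕ} (hm : m < s) (hm' : m' < s) (hc : c < s * r) (hc' : c' < s * r)
    (h : m = m' ∧ (c + 1 = c' ∨ c' + 1 = c) ∨ c = c' ∧ (m + 1 = m' ∨ m' + 1 = m)) :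
    (Qgraph s r).Adj (cell s r m c) (cell s r m' c') := by
  simp only [Qgraph, SimpleGraph.fromRel_adj, cell, ne_eq, Sum.inl.injEq, Prod.mk.injEq,
    Fin.ext_iff, Fin.val_ofNat, Nat.mod_eq_of_lt, hm, hm', hc, hc']
  omega

theorem adj_inr_cell (u : Fin r × Fin 2) {m c : ℕ} (hm : m = 0) (h₁ : (u.1 : ℕ) * s ≤ c)
    (h₂ : c < (u.1 : ℕ) * s + s) : (Qgraph s r).Adj (Sum.inr u) (cell s r m c) := by
  have hc : c < s * r := by linarith [block_end_le (s := s) u.1]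
  simp [Qgraph, cell, Nat.mod_eq_of_lt, hc, hm, h₁, h₂]

open SimpleGraph

variable {x x' : Fin r × Fin 2}

def sameBlockPath (x x' : Fin r × Fin 2) (k : ℕ) : ℕ → (Fin s × Fin (s * r)) ⊕ (Fin r × Fin 2)
  | 0 => Sum.inr x
  | 1 => cell s r 0 (x.1 * s + k)
  | _ => Sum.inr x'

theorem hasInternallyDisjointPaths_of_fst_eq (hxx : x ≠ x') (h : x.1 = x'.1) :
    (Qgraph s r).HasInternallyDisjointPaths (Fin s) (Sum.inr x) (Sum.inr x') := by
  have hk (k : Fin s) : (x.1 : ℕ) * s + k < s * r := by linarith [block_end_le (s := s) x.1, k.isLt]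
  refine hasInternallyDisjointPaths_of_fun (fun k => sameBlockPath x x' k) (fun _ => 2)
    (fun _ => rfl) (fun _ => rfl) ?_ ?_ ?_
  · intro k i hi
    interval_cases i
    · exact adj_inr_cell x rfl (by omega) (by omega)
    · exact (adj_inr_cell x' rfl (by rw [← h]; omega) (by rw [← h]; omega)).symm
  · intro k i hi j hj hij
    simp only [Set.mem_Iic] at hi hj
    interval_cases i <;> interval_cases j <;>
      simp_all [sameBlockPath, cell_ne_inr, (cell_ne_inr _ _ _).symm]
  · intro k l i j hi₀ hi hj₀ hj hij
    obtain rfl : i = 1 := by omega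
    obtain rfl : j = 1 := by omega
    rw [sameBlockPath, sameBlockPath, cell_inj s.pos_of_neZero s.pos_of_neZero (hk k) (hk l)] at hij
    exact Fin.ext (by omega)

/-- The walk leaving terminal `x` down column `c₁` to row `h`, then along row `h` to column
`c₂`, then up column `c₂` to terminal `x'`, as a function of the step `i`. -/
def uPath (x x' : Fin r × Fin 2) (c₁ c₂ h i : ℕ) : (Fin s × Fin (s * r)) ⊕ (Fin r × Fin 2) :=
  if i = 0 then Sum.inr x
  else if i ≤ h + 1 then cell s r (i - 1) c₁
  else if i ≤ h + 1 + (c₂ - c₁) then cell s r h (c₁ + (i - 1 - h))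
  else if i < 2 * h + 2 + (c₂ - c₁) then cell s r (2 * h + 1 + (c₂ - c₁) - i) c₂
  else Sum.inr x'

section uPath

variable {c₁ c₂ h : ℕ}

theorem uPath_zero : uPath (s := s) x x' c₁ c₂ h 0 = Sum.inr x := rfl

theorem uPath_length : uPath (s := s) x x' c₁ c₂ h (2 * h + 2 + (c₂ - c₁)) = Sum.inr x' := by
  simp only [uPath]
  split_ifs <;> first | rfl | omega

theorem uPath_adj (hh : h < s) (hc : c₁ ≤ c₂) (hc₂ : c₂ < s * r)
    (hx₁ : (x.1 : ℕ) * s ≤ c₁) (hx₂ : c₁ < x.1 * s + s)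
    (hx'₁ : (x'.1 : ℕ) * s ≤ c₂) (hx'₂ : c₂ < x'.1 * s + s) :
    ∀ i < 2 * h + 2 + (c₂ - c₁),
      (Qgraph s r).Adj (uPath x x' c₁ c₂ h i) (uPath x x' c₁ c₂ h (i + 1)) := by
  intro i hi
  simp only [uPath]
  split_ifs <;> first
    | contradiction
    | omega
    | exact adj_inr_cell x (by omega) (by omega) (by omega)
    | exact (adj_inr_cell x' (by omega) (by omega) (by omega)).symm
    | exact adj_cell (by omega) (by omega) (by omega) (by omega) (by omega)

theorem uPath_injOn (hxx : x ≠ x') (hh : h < s) (hc : c₁ < c₂) (hc₂ : c₂ < s * r) :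
    Set.InjOn (uPath (s := s) (r := r) x x' c₁ c₂ h) (Set.Iic (2 * h + 2 + (c₂ - c₁))) := by
  intro i hi j hj hij
  simp only [uPath, Set.mem_Iic] at hi hj hij
  split_ifs at hij <;> first
    | omega
    | exact absurd hij (cell_ne_inr _ _ _)
    | exact absurd hij.symm (cell_ne_inr _ _ _)
    | (rw [cell_inj (by omega) (by omega) (by omega) (by omega)] at hij; omega)
    | exact absurd (Sum.inr_injective hij) hxx
    | exact absurd (Sum.inr_injective hij).symm hxx

/-- Nested `U`s (the inner one starting further right, turning higher and ending further left)
share no interior vertex. -/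
theorem uPath_ne_of_nested {c₁' c₂' h' i j : ℕ} (hh : h < s) (hc₂ : c₂ < s * r)
    (h₁ : c₁ < c₁') (hh' : h' < h) (h₂ : c₂' < c₂) (hc' : c₁' ≤ c₂')
    (hi₀ : 0 < i) (hi : i < 2 * h + 2 + (c₂ - c₁))
    (hj₀ : 0 < j) (hj : j < 2 * h' + 2 + (c₂' - c₁')) :
    uPath x x' c₁ c₂ h i ≠ uPath (s := s) x x' c₁' c₂' h' j := by
  intro hij
  simp only [uPath] at hij
  split_ifs at hij <;> first
    | omega
    | (rw [cell_inj (by omega) (by omega) (by omega) (by omega)] at hij; omega)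

end uPath

theorem hasInternallyDisjointPaths_of_fst_lt (hx : x.1 < x'.1) :
    (Qgraph s r).HasInternallyDisjointPaths (Fin s) (Sum.inr x) (Sum.inr x') := by
  have hA : (x.1 : ℕ) * s + s ≤ x'.1 * s := by nlinarith [Fin.lt_def.mp hx]
  have hB := block_end_le (s := s) x'.1
  have hxx : x ≠ x' := fun h => hx.ne (congrArg Prod.fst h)
  refine hasInternallyDisjointPaths_of_fun
    (fun k => uPath x x' (x.1 * s + k) (x'.1 * s + (s - 1 - k)) (s - 1 - k))
    (fun k => 2 * (s - 1 - k) + 2 + (x'.1 * s + (s - 1 - k) - (x.1 * s + k)))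
    (fun _ => uPath_zero) (fun _ => uPath_length)
    (fun k => uPath_adj (by omega) (by omega) (by omega) (by omega) (by omega) (by omega)
      (by omega))
    (fun k => uPath_injOn hxx (by omega) (by omega) (by omega))
    fun k l i j hi₀ hi hj₀ hj hij => ?_
  rcases lt_trichotomy k l with hkl | rfl | hkl
  · exact absurd hij (uPath_ne_of_nested (by omega) (by omega) (by omega) (by omega) (by omega)
      (by omega) hi₀ hi hj₀ hj)
  · rfl
  · exact absurd hij.symm (uPath_ne_of_nested (by omega) (by omega) (by omega) (by omega)
      (by omega) (by omega) hj₀ hj hi₀ hi)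

end Qgraph

theorem Qgraph_terminals_internally_disjoint_paths_general (s r : ℕ) (hs : 1 ≤ s)
    (x x' : Fin r × Fin 2) (hxx : x ≠ x') :
    ∃ P : Fin s → (Qgraph s r).Walk (Sum.inr x) (Sum.inr x'),
      (∀ i : Fin s, (P i).IsPath) ∧
      (∀ i j : Fin s, i ≠ j → ∀ v, v ∈ (P i).support → v ∈ (P j).support →
        v = Sum.inr x ∨ v = Sum.inr x') := by
  have : NeZero s := ⟨by omega⟩
  have : NeZero r := NeZero.of_pos x.1.pos
  change (Qgraph s r).HasInternallyDisjointPaths (Fin s) (Sum.inr x) (Sum.inr x')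
  rcases lt_trichotomy x.1 x'.1 with h | h | h
  · exact Qgraph.hasInternallyDisjointPaths_of_fst_lt h
  · exact Qgraph.hasInternallyDisjointPaths_of_fst_eq hxx h
  · exact (Qgraph.hasInternallyDisjointPaths_of_fst_lt h).symm

/-- For all `s, r ≥ 1` and any two distinct terminals `x`, `x'` of `Q_{s,r}`, there are
`s` paths from `x` to `x'` in `Q_{s,r}` that pairwise share no vertices other than
`x` and `x'`. -/
theorem Qgraph_terminals_internally_disjoint_paths (s r : ℕ) (hs : 1 ≤ s) (hr : 1 ≤ r)
    (x x' : Fin r × Fin 2) (hxx : x ≠ x') :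
    ∃ P : Fin s → (Qgraph s r).Walk (Sum.inr x) (Sum.inr x'),
      (∀ i : Fin s, (P i).IsPath) ∧
      (∀ i j : Fin s, i ≠ j → ∀ v, v ∈ (P i).support → v ∈ (P j).support →
        v = Sum.inr x ∨ v = Sum.inr x') :=
  Qgraph_terminals_internally_disjoint_paths_general s r hs x x' hxx
end

section
/- Let α ≥ 1 be an integer, let G be a finite simple graph, and let Z ⊆ V(G) with |Z| = 3α. Suppose that for every separation (A,B) of G of order less than α, exactly one of the two sides W ∈ {A,B} satisfies |W ∩ Z| ≤ |A ∩ B|. Then the set 𝒯 of all separations (A,B) of G of order less than α with |A ∩ Z| ≤ |A ∩ B| is a tangle of order α in G. -/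
/-- `(A, B)` is a separation of `G`: `A ∪ B = V(G)` and no edge of `G` joins a vertex
of `A ∖ B` to a vertex of `B ∖ A`. -/
def IsSeparation {V : Type*} (G : SimpleGraph V) (A B : Set V) : Prop :=
  A ∪ B = Set.univ ∧ ∀ a b : V, G.Adj a b → ¬(a ∈ A \ B ∧ b ∈ B \ A)

/-- `T` is a tangle of order `k` in `G`: every member of `T` is a separation of order
less than `k`; for every separation `(A, B)` of order less than `k`, exactly one of
`(A, B)` and `(B, A)` belongs to `T`; and no three members of `T` have their small
sides covering `V(G)`. -/
def IsTangle {V : Type*} (G : SimpleGraph V) (k : ℕ) (T : Set (Set V × Set V)) : Prop :=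
  (∀ P ∈ T, IsSeparation G P.1 P.2 ∧ (P.1 ∩ P.2).ncard < k) ∧
  (∀ A B : Set V, IsSeparation G A B → (A ∩ B).ncard < k →
    Xor' ((A, B) ∈ T) ((B, A) ∈ T)) ∧
  (∀ P₁ ∈ T, ∀ P₂ ∈ T, ∀ P₃ ∈ T,
    (P₁ : Set V × Set V).1 ∪ (P₂ : Set V × Set V).1 ∪ (P₃ : Set V × Set V).1 ≠ Set.univ)

/-- if `|Z| = 3α` and for every separation of order `< α` exactly one of
the two sides `W` satisfies `|W ∩ Z| ≤ |A ∩ B|`, then the set of all separations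
`(A, B)` of order `< α` with `|A ∩ Z| ≤ |A ∩ B|` is a tangle of order `α`. -/
theorem tangle_from_Z {V : Type*} [Fintype V] (G : SimpleGraph V)
    (α : ℕ) (hα : 1 ≤ α) (Z : Set V) (hZ : Z.ncard = 3 * α)
    (h : ∀ A B : Set V, IsSeparation G A B → (A ∩ B).ncard < α →
      Xor' ((A ∩ Z).ncard ≤ (A ∩ B).ncard) ((B ∩ Z).ncard ≤ (A ∩ B).ncard)) :
    IsTangle G α
      {P : Set V × Set V | IsSeparation G P.1 P.2 ∧ (P.1 ∩ P.2).ncard < α ∧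
        (P.1 ∩ Z).ncard ≤ (P.1 ∩ P.2).ncard} := by

  constructor
  · rintro ⟨A, B⟩ ⟨hs, ho, _⟩
    exact ⟨hs, ho⟩
  constructor
  · intro A B hs ho
    have hx := h A B hs ho
    have hBA : (B ∩ A) = (A ∩ B) := Set.inter_comm B A
    rcases hx with ⟨h1, h2⟩ | ⟨h1, h2⟩
    · left
      refine ⟨⟨hs, ho, h1⟩, ?_⟩
      rintro ⟨_, _, hz⟩
      exact h2 (by simpa [hBA] using hz)
    · right
      refine ⟨?_, ?_⟩
      · refine ⟨⟨?_, ?_⟩, by simpa [hBA] using ho, by simpa [hBA] using h1⟩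
        · rw [Set.union_comm]; exact hs.1
        · intro a b hab ⟨ha, hb⟩
          exact hs.2 b a hab.symm ⟨hb, ha⟩
      · rintro ⟨_, _, hz⟩
        exact h2 hz
  · rintro ⟨A1, B1⟩ ⟨_, hk1, hz1⟩ ⟨A2, B2⟩ ⟨_, hk2, hz2⟩ ⟨A3, B3⟩ ⟨_, hk3, hz3⟩ huniv
    simp only at huniv hz1 hz2 hz3 hk1 hk2 hk3
    have hsub : Z ⊆ A1 ∪ A2 ∪ A3 := huniv ▸ Set.subset_univ Z
    have hZeq : Z = (A1 ∩ Z) ∪ (A2 ∩ Z) ∪ (A3 ∩ Z) := by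
      ext x
      constructor
      · intro hx
        rcases hsub hx with (h' | h') | h'
        · exact Or.inl (Or.inl ⟨h', hx⟩)
        · exact Or.inl (Or.inr ⟨h', hx⟩)
        · exact Or.inr ⟨h', hx⟩
      · rintro ((⟨_, hx⟩ | ⟨_, hx⟩) | ⟨_, hx⟩) <;> exact hx
    have hle : Z.ncard ≤ (A1 ∩ Z).ncard + (A2 ∩ Z).ncard + (A3 ∩ Z).ncard := by
      calc Z.ncard = ((A1 ∩ Z) ∪ (A2 ∩ Z) ∪ (A3 ∩ Z)).ncard := by rw [← hZeq]
        _ ≤ ((A1 ∩ Z) ∪ (A2 ∩ Z)).ncard + (A3 ∩ Z).ncard :=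
            Set.ncard_union_le _ _
        _ ≤ (A1 ∩ Z).ncard + (A2 ∩ Z).ncard + (A3 ∩ Z).ncard := by
            have := Set.ncard_union_le (A1 ∩ Z) (A2 ∩ Z)
            omega
    omega
end
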